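/- arXiv:1605.03792 — 8 statements merged into one kernel-verified Lean document; each statement's English description precedes it below -/
import Mathlib

section
/- Let n ≥ 2 and let b₁, …, bₙ be elements of a commutative ring. Then ∑_{ℓ=1}^{n} (−1)^{n−ℓ} · (∏_{1≤i<j≤n, i≠ℓ, j≠ℓ} (bⱼ − bᵢ)) · (∏_{i=1}^{n} (bᵢ + b_ℓ)) = 2·(b₁ + ⋯ + bₙ) · ∏_{1≤i<j≤n} (bⱼ − bᵢ). -/
open Finset

section Aux

variable {R : Type*} [CommRing R]

open Polynomial Matrix

private lemma prod_pairs_aux {M : Type*} [CommMonoid M] {n : ℕ} (f : Fin n × Fin n → M) :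
    ∏ p ∈ Finset.univ.filter (fun p : Fin n × Fin n => p.1 < p.2), f p
      = ∏ i : Fin n, ∏ j ∈ Ioi i, f (i, j) := by
  rw [Finset.prod_filter, Fintype.prod_prod_type]
  refine Finset.prod_congr rfl fun i _ => ?_
  rw [← Finset.prod_filter]
  congr 1
  ext j
  simp

private lemma prod_pairs_ne_aux {n : ℕ} (b : Fin (n + 1) → R) (ℓ : Fin (n + 1)) :
    ∏ p ∈ Finset.univ.filter
        (fun p : Fin (n + 1) × Fin (n + 1) => p.1 < p.2 ∧ p.1 ≠ ℓ ∧ p.2 ≠ ℓ),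
      (b p.2 - b p.1)
    = ∏ p ∈ Finset.univ.filter (fun p : Fin n × Fin n => p.1 < p.2),
        (b (ℓ.succAbove p.2) - b (ℓ.succAbove p.1)) := by
  refine (Finset.prod_bij (fun p _ => (ℓ.succAbove p.1, ℓ.succAbove p.2)) ?_ ?_ ?_ ?_).symm
  · intro p hp
    simp only [mem_filter, mem_univ, true_and] at hp ⊢
    exact ⟨Fin.succAbove_lt_succAbove_iff.mpr hp, Fin.succAbove_ne _ _, Fin.succAbove_ne _ _⟩
  · intro p hp q hq h
    simp only [Prod.mk.injEq] at h
    exact Prod.ext (Fin.succAbove_right_injective h.1) (Fin.succAbove_right_injective h.2)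
  · intro p hp
    simp only [mem_filter, mem_univ, true_and] at hp
    obtain ⟨i, hi⟩ := Fin.exists_succAbove_eq hp.2.1
    obtain ⟨j, hj⟩ := Fin.exists_succAbove_eq hp.2.2
    refine ⟨(i, j), ?_, ?_⟩
    · simp only [mem_filter, mem_univ, true_and]
      rw [← Fin.succAbove_lt_succAbove_iff (p := ℓ), hi, hj]
      exact hp.1
    · simp [hi, hj]
  · intros; rfl

private lemma coeff_top_aux {n : ℕ} (b : Fin (n + 1) → R) :
    ((∏ k : Fin (n + 1), (X + C (b k))) - ∏ k : Fin (n + 1), (X - C (b k))).coeff n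
      = 2 * ∑ i, b i := by
  have key : ∀ c : Fin (n + 1) → R,
      (∏ k : Fin (n + 1), (X + C (c k))).coeff n = ∑ i, c i := by
    intro c
    rw [Finset.prod_X_add_C_coeff _ _ (by simp)]
    have hcard : (Finset.univ : Finset (Fin (n + 1))).card - n = 1 := by simp
    rw [hcard, Finset.powersetCard_one, Finset.sum_map]
    simp
  have h2 : ∀ k : Fin (n + 1), X - C (b k) = X + C (-(b k)) := by
    intro k; rw [map_neg, sub_eq_add_neg]
  rw [Polynomial.coeff_sub, key b]
  simp only [h2]
  rw [key fun k => -(b k)]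
  rw [Finset.sum_neg_distrib]
  ring

private lemma natDegree_lt_aux {n : ℕ} (b : Fin (n + 1) → R) [Nontrivial R] :
    ((∏ k : Fin (n + 1), (X + C (b k))) - ∏ k : Fin (n + 1), (X - C (b k))).natDegree
      < n + 1 := by
  set q := ∏ k : Fin (n + 1), (X + C (b k)) with hq
  set p := ∏ k : Fin (n + 1), (X - C (b k)) with hp
  have hqm : q.Monic := monic_prod_of_monic _ _ fun k _ => monic_X_add_C _
  have hpm : p.Monic := monic_prod_of_monic _ _ fun k _ => monic_X_sub_C _
  have hqd : q.natDegree = n + 1 := by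
    rw [hq, natDegree_prod_of_monic _ _ fun k _ => monic_X_add_C _]
    simp
  have hpd : p.natDegree = n + 1 := by
    rw [hp, natDegree_prod_of_monic _ _ fun k _ => monic_X_sub_C _]
    simp
  rcases eq_or_ne (q - p) 0 with h | h
  · rw [h]; simp
  · have hdeg : (q - p).degree < q.degree := by
      refine Polynomial.degree_sub_lt ?_ hqm.ne_zero ?_
      · rw [Polynomial.degree_eq_natDegree hqm.ne_zero,
          Polynomial.degree_eq_natDegree hpm.ne_zero, hqd, hpd]
      · rw [hqm.leadingCoeff, hpm.leadingCoeff]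
    exact (Polynomial.natDegree_lt_iff_degree_lt h).mpr
      (lt_of_lt_of_le hdeg (by rw [Polynomial.degree_eq_natDegree hqm.ne_zero, hqd]))

end Aux

open Polynomial Matrix

/-- The polynomial identity
`∑_{ℓ=1}^{n} (−1)^{n−ℓ} (∏_{i<j, i,j≠ℓ} (bⱼ−bᵢ)) (∏_{i=1}^{n} (bᵢ+b_ℓ))
  = 2 (b₁+⋯+bₙ) ∏_{i<j} (bⱼ−bᵢ)` in a commutative ring. -/
theorem stmt_6 (R : Type*) [CommRing R] (n : ℕ) (hn : 2 ≤ n) (b : Fin n → R) :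
    (∑ ℓ : Fin n, (-1 : R) ^ (n - 1 - (ℓ : ℕ)) *
        (∏ p ∈ Finset.univ.filter
            (fun p : Fin n × Fin n => p.1 < p.2 ∧ p.1 ≠ ℓ ∧ p.2 ≠ ℓ),
          (b p.2 - b p.1)) *
        ∏ i : Fin n, (b i + b ℓ)) =
      2 * (∑ i : Fin n, b i) *
        ∏ p ∈ Finset.univ.filter (fun p : Fin n × Fin n => p.1 < p.2),
          (b p.2 - b p.1) := by
  classical
  nontriviality R
  obtain ⟨m, rfl⟩ : ∃ m, n = m + 1 := ⟨n - 1, by omega⟩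
  set q := ∏ k : Fin (m + 1), (X + C (b k)) with hqdef
  set P := ∏ k : Fin (m + 1), (X - C (b k)) with hPdef
  set g := q - P with hgdef
  have hroot : ∀ i, P.eval (b i) = 0 := by
    intro i
    rw [hPdef, Polynomial.eval_prod]
    exact Finset.prod_eq_zero (Finset.mem_univ i) (by simp)
  have hcol : ∀ i, (∏ k, (b k + b i)) = g.eval (b i) := by
    intro i
    rw [hgdef, Polynomial.eval_sub, hroot i, sub_zero, hqdef, Polynomial.eval_prod]
    simp [add_comm]
  have hdeg : g.natDegree < m + 1 := natDegree_lt_aux b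
  have heval : ∀ x : R, g.eval x = ∑ j : Fin (m + 1), g.coeff j * x ^ (j : ℕ) := by
    intro x
    rw [Polynomial.eval_eq_sum_range' hdeg]
    exact (Fin.sum_univ_eq_sum_range (fun j => g.coeff j * x ^ j) (m + 1)).symm
  set M := (Matrix.vandermonde b).updateCol (Fin.last m) (fun i => g.eval (b i))
    with hM
  have hdet1 : M.det = 2 * (∑ i, b i) * (Matrix.vandermonde b).det := by
    have hfun : (fun i => g.eval (b i))
        = fun k => ∑ j : Fin (m + 1), g.coeff (j : ℕ) • Matrix.vandermonde b k j := by
      funext k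
      rw [heval]
      simp [Matrix.vandermonde_apply]
    rw [hM, hfun, Matrix.det_updateCol_sum]
    rw [smul_eq_mul, Fin.val_last]
    congr 1
    exact coeff_top_aux b
  have hsub : ∀ ℓ : Fin (m + 1),
      M.submatrix ℓ.succAbove (Fin.last m).succAbove
        = Matrix.vandermonde (b ∘ ℓ.succAbove) := by
    intro ℓ
    ext r c
    simp only [Matrix.submatrix_apply, hM, Fin.succAbove_last, Matrix.updateCol_apply,
      Matrix.vandermonde_apply, Function.comp]
    rw [if_neg (Fin.castSucc_lt_last c).ne]
    simp [Matrix.vandermonde_apply]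
  have hdet2 : M.det
      = ∑ ℓ : Fin (m + 1), (-1 : R) ^ ((ℓ : ℕ) + m) * g.eval (b ℓ) *
          ∏ pr ∈ Finset.univ.filter
              (fun pr : Fin (m + 1) × Fin (m + 1) => pr.1 < pr.2 ∧ pr.1 ≠ ℓ ∧ pr.2 ≠ ℓ),
            (b pr.2 - b pr.1) := by
    rw [Matrix.det_succ_column M (Fin.last m)]
    refine Finset.sum_congr rfl fun ℓ _ => ?_
    rw [hsub ℓ, Matrix.det_vandermonde, prod_pairs_ne_aux b ℓ, prod_pairs_aux]
    simp [hM, Matrix.updateCol_apply]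
  calc (∑ ℓ : Fin (m + 1), (-1 : R) ^ (m + 1 - 1 - (ℓ : ℕ)) *
        (∏ pr ∈ Finset.univ.filter
            (fun pr : Fin (m + 1) × Fin (m + 1) => pr.1 < pr.2 ∧ pr.1 ≠ ℓ ∧ pr.2 ≠ ℓ),
          (b pr.2 - b pr.1)) *
        ∏ i : Fin (m + 1), (b i + b ℓ)) = M.det := by
        rw [hdet2]
        refine Finset.sum_congr rfl fun ℓ _ => ?_
        rw [← hcol ℓ]
        have hsign : (-1 : R) ^ ((ℓ : ℕ) + m) = (-1 : R) ^ (m + 1 - 1 - (ℓ : ℕ)) := by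
          have h1 : (ℓ : ℕ) + m = (m + 1 - 1 - (ℓ : ℕ)) + 2 * (ℓ : ℕ) := by
            have := ℓ.is_lt; omega
          rw [h1, pow_add, pow_mul]
          simp
        rw [hsign]
        ring
    _ = 2 * (∑ i, b i) *
        ∏ pr ∈ Finset.univ.filter (fun pr : Fin (m + 1) × Fin (m + 1) => pr.1 < pr.2),
          (b pr.2 - b pr.1) := by
        rw [hdet1, Matrix.det_vandermonde,
          ← prod_pairs_aux (fun pr : Fin (m + 1) × Fin (m + 1) => b pr.2 - b pr.1)]
end

section
/- Let κ ≥ 2, Δ > 0 and a be real numbers. Then ∑_{n ∈ ℤ} 1/((n+a)² + Δ²)^{κ/2} ≤ ((κ + Δ)/Δ) · ∫_ℝ dx/(x² + Δ²)^{κ/2}. -/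
open MeasureTheory

noncomputable def Fk (κ Δ : ℝ) (x : ℝ) : ℝ := 1 / (x ^ 2 + Δ ^ 2) ^ (κ / 2)

section FkLemmas

variable {κ Δ : ℝ} (hκ : 2 ≤ κ) (hΔ : 0 < Δ)

include hΔ in
lemma base_pos (x : ℝ) : 0 < x ^ 2 + Δ ^ 2 := by positivity

include hΔ in
lemma Fk_pos (x : ℝ) : 0 < Fk κ Δ x := by
  have : 0 < x ^ 2 + Δ ^ 2 := by positivity
  unfold Fk; positivity

include hκ hΔ in
lemma Fk_mono {u v : ℝ} (h : v ^ 2 ≤ u ^ 2) : Fk κ Δ u ≤ Fk κ Δ v := by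
  unfold Fk
  have h1 : 0 < v ^ 2 + Δ ^ 2 := by positivity
  apply one_div_le_one_div_of_le
  · exact Real.rpow_pos_of_pos h1 _
  · apply Real.rpow_le_rpow h1.le (by linarith) (by linarith)

include hΔ in
lemma sq_rpow : ((Δ ^ 2 : ℝ)) ^ (κ / 2) = Δ ^ κ := by
  rw [← Real.rpow_natCast Δ 2, ← Real.rpow_mul hΔ.le]
  norm_num
  congr 1
  ring

include hκ hΔ in
lemma Fk_le (x : ℝ) : Fk κ Δ x ≤ 1 / Δ ^ κ := by
  have h := Fk_mono hκ hΔ (u := x) (v := 0) (by nlinarith [sq_nonneg x])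
  calc Fk κ Δ x ≤ Fk κ Δ 0 := h
    _ = 1 / Δ ^ κ := by
        unfold Fk
        rw [show (0:ℝ) ^ 2 + Δ ^ 2 = Δ ^ 2 by ring, sq_rpow hΔ]

include hΔ in
lemma Fk_cont : Continuous (Fk κ Δ) := by
  have hb : Continuous fun x : ℝ => x ^ 2 + Δ ^ 2 := by continuity
  have hb' : ∀ x : ℝ, x ^ 2 + Δ ^ 2 ≠ 0 := fun x => (base_pos hΔ x).ne'
  have h : Continuous fun x : ℝ => (x ^ 2 + Δ ^ 2) ^ (κ / 2) :=
    hb.rpow_const fun x => Or.inl (hb' x)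
  have h2 : Continuous fun x : ℝ => ((x ^ 2 + Δ ^ 2) ^ (κ / 2))⁻¹ :=
    h.inv₀ fun x => (Real.rpow_pos_of_pos (base_pos hΔ x) _).ne'
  unfold Fk
  simpa [one_div] using h2

include hκ hΔ in
lemma Fk_integrable : Integrable (Fk κ Δ) := by
  set c : ℝ := (Δ ^ 2) ^ (κ / 2 - 1) * min 1 (Δ ^ 2) with hc
  have hΔ2 : (0:ℝ) < Δ ^ 2 := by positivity
  have hc0 : 0 < c := by
    apply mul_pos (Real.rpow_pos_of_pos hΔ2 _)
    exact lt_min one_pos hΔ2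
  have hbound : ∀ x : ℝ, Fk κ Δ x ≤ c⁻¹ * (1 + x ^ 2)⁻¹ := by
    intro x
    have hb : 0 < x ^ 2 + Δ ^ 2 := base_pos hΔ x
    have h1 : c * (1 + x ^ 2) ≤ (x ^ 2 + Δ ^ 2) ^ (κ / 2) := by
      have e1 : (x ^ 2 + Δ ^ 2) ^ (κ / 2)
          = (x ^ 2 + Δ ^ 2) ^ (κ / 2 - 1) * (x ^ 2 + Δ ^ 2) := by
        rw [← Real.rpow_add_one hb.ne' (κ / 2 - 1)]
        ring_nf
      have h2 : (Δ ^ 2) ^ (κ / 2 - 1) ≤ (x ^ 2 + Δ ^ 2) ^ (κ / 2 - 1) :=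
        Real.rpow_le_rpow hΔ2.le (by nlinarith [sq_nonneg x]) (by linarith)
      have h3 : min 1 (Δ ^ 2) * (1 + x ^ 2) ≤ x ^ 2 + Δ ^ 2 := by
        have hm1 : min 1 (Δ ^ 2) ≤ 1 := min_le_left _ _
        have hm2 : min 1 (Δ ^ 2) ≤ Δ ^ 2 := min_le_right _ _
        have hm0 : 0 < min 1 (Δ ^ 2) := lt_min one_pos hΔ2
        nlinarith [sq_nonneg x]
      calc c * (1 + x ^ 2)
          = (Δ ^ 2) ^ (κ / 2 - 1) * (min 1 (Δ ^ 2) * (1 + x ^ 2)) := by ring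
        _ ≤ (x ^ 2 + Δ ^ 2) ^ (κ / 2 - 1) * (x ^ 2 + Δ ^ 2) := by
            apply mul_le_mul h2 h3 (by positivity)
              (le_of_lt (Real.rpow_pos_of_pos hb _))
        _ = (x ^ 2 + Δ ^ 2) ^ (κ / 2) := e1.symm
    have hx1 : (0:ℝ) < 1 + x ^ 2 := by positivity
    rw [Fk, one_div, ← mul_inv]
    exact inv_anti₀ (by positivity) h1
  apply Integrable.mono' (integrable_inv_one_add_sq.const_mul c⁻¹)
    (Fk_cont hΔ).aestronglyMeasurable
  filter_upwards with x
  rw [Real.norm_eq_abs, abs_of_pos (Fk_pos hΔ x)]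
  exact hbound x

include hκ hΔ in
lemma Fk_integral_lb : 1 / Δ ^ κ ≤ κ / Δ * ∫ x : ℝ, Fk κ Δ x := by
  have hκ0 : (0:ℝ) < κ := by linarith
  set t : ℝ := Δ / κ with ht
  have ht0 : 0 < t := div_pos hΔ hκ0
  set c₀ : ℝ := Fk κ Δ t with hc₀
  have hc₀0 : 0 < c₀ := Fk_pos hΔ t
  -- step 1: interval integral lower bound
  have hstep1 : 2 * t * c₀ ≤ ∫ x in (-t)..t, Fk κ Δ x := by
    have hmono : ∀ x ∈ Set.Icc (-t) t, c₀ ≤ Fk κ Δ x := by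
      intro x hx
      exact Fk_mono hκ hΔ (by nlinarith [hx.1, hx.2])
    have := intervalIntegral.integral_mono_on (by linarith : -t ≤ t)
      (intervalIntegrable_const (c := c₀))
      ((Fk_integrable hκ hΔ).intervalIntegrable)
      hmono
    calc 2 * t * c₀ = ∫ _ in (-t)..t, (c₀ : ℝ) := by
          rw [intervalIntegral.integral_const, smul_eq_mul]; ring
      _ ≤ _ := this
  -- step 2: interval integral ≤ whole integral
  have hstep2 : (∫ x in (-t)..t, Fk κ Δ x) ≤ ∫ x : ℝ, Fk κ Δ x := by
    rw [intervalIntegral.integral_of_le (by linarith : -t ≤ t)]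
    exact setIntegral_le_integral (Fk_integrable hκ hΔ)
      (Filter.Eventually.of_forall fun x => (Fk_pos hΔ x).le)
  -- step 3: 1 / Δ ^ κ ≤ κ / Δ * (2 t c₀)
  have hstep3 : 1 / Δ ^ κ ≤ κ / Δ * (2 * t * c₀) := by
    have he : κ / Δ * (2 * t * c₀) = 2 * c₀ := by
      field_simp [ht]
      rw [ht]; field_simp
    rw [he]
    -- need (t² + Δ²)^(κ/2) ≤ 2 Δ^κ
    have hb : (0:ℝ) < t ^ 2 + Δ ^ 2 := by positivity
    have key : (t ^ 2 + Δ ^ 2) ^ (κ / 2) ≤ 2 * Δ ^ κ := by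
      have e1 : t ^ 2 + Δ ^ 2 = Δ ^ 2 * (1 + (κ ^ 2)⁻¹) := by
        field_simp [ht]
        rw [ht, div_pow, add_mul, div_mul_cancel₀ _ (by positivity : (κ:ℝ) ^ 2 ≠ 0)]
        ring
      have h2 : ((1:ℝ) + (κ ^ 2)⁻¹) ^ (κ / 2) ≤ 2 := by
        have hpos : (0:ℝ) < 1 + (κ ^ 2)⁻¹ := by positivity
        rw [Real.rpow_def_of_pos hpos, mul_comm]
        have hlog : Real.log (1 + (κ ^ 2)⁻¹) ≤ (κ ^ 2)⁻¹ := by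
          have := Real.log_le_sub_one_of_pos hpos
          linarith
        have h3 : κ / 2 * Real.log (1 + (κ ^ 2)⁻¹) ≤ Real.log 2 := by
          have hκ2 : (0:ℝ) < κ ^ 2 := by positivity
          have h4 : κ / 2 * (κ ^ 2)⁻¹ = (2 * κ)⁻¹ := by
            field_simp
          have h5 : κ / 2 * Real.log (1 + (κ ^ 2)⁻¹) ≤ κ / 2 * (κ ^ 2)⁻¹ :=
            mul_le_mul_of_nonneg_left hlog (by linarith)
          have h6 : (2 * κ)⁻¹ ≤ (4:ℝ)⁻¹ := by
            apply inv_anti₀ (by norm_num)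
            linarith
          have h7 : (0.6931471803 : ℝ) < Real.log 2 := Real.log_two_gt_d9
          calc κ / 2 * Real.log (1 + (κ ^ 2)⁻¹) ≤ (2 * κ)⁻¹ := by rw [← h4]; exact h5
            _ ≤ (4:ℝ)⁻¹ := h6
            _ ≤ Real.log 2 := by linarith
        calc Real.exp (κ / 2 * Real.log (1 + (κ ^ 2)⁻¹))
            ≤ Real.exp (Real.log 2) := Real.exp_le_exp.mpr h3
          _ = 2 := Real.exp_log (by norm_num)
      calc (t ^ 2 + Δ ^ 2) ^ (κ / 2)
          = (Δ ^ 2) ^ (κ / 2) * (1 + (κ ^ 2)⁻¹) ^ (κ / 2) := by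
            rw [e1, Real.mul_rpow (by positivity) (by positivity)]
        _ ≤ Δ ^ κ * 2 := by
            rw [sq_rpow hΔ]
            exact mul_le_mul_of_nonneg_left h2 (Real.rpow_pos_of_pos hΔ κ).le
        _ = 2 * Δ ^ κ := by ring
    have hΔκ : (0:ℝ) < Δ ^ κ := Real.rpow_pos_of_pos hΔ κ
    have hbpow : (0:ℝ) < (t ^ 2 + Δ ^ 2) ^ (κ / 2) := Real.rpow_pos_of_pos hb _
    rw [hc₀, Fk, mul_one_div, div_le_div_iff₀ hΔκ hbpow]
    nlinarith [key, hΔκ.le]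
  calc 1 / Δ ^ κ ≤ κ / Δ * (2 * t * c₀) := hstep3
    _ ≤ κ / Δ * ∫ x : ℝ, Fk κ Δ x := by
        apply mul_le_mul_of_nonneg_left (le_trans hstep1 hstep2)
        positivity

end FkLemmas
lemma sum_Icc_split (g : ℝ → ℝ) (N : ℕ) :
    ∑ n ∈ Finset.Icc (-(N:ℤ) - 1) (N:ℤ), g (n:ℝ) =
      (∑ i ∈ Finset.range N, g (-2 - (i:ℝ))) + (g (-1) + g 0)
        + ∑ i ∈ Finset.range N, g (1 + (i:ℝ)) := by
  induction N with
  | zero =>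
      have h : Finset.Icc (-(0:ℤ) - 1) (0:ℤ) = {-1, 0} := by decide
      simp only [Nat.cast_zero, h, Finset.range_zero, Finset.sum_empty]
      rw [Finset.sum_pair (by decide : (-1 : ℤ) ≠ 0)]
      norm_num
  | succ N ih =>
      have hIcc : Finset.Icc (-((N:ℤ)+1) - 1) ((N:ℤ)+1)
          = insert (-(N:ℤ) - 2) (insert ((N:ℤ) + 1) (Finset.Icc (-(N:ℤ) - 1) (N:ℤ))) := by
        ext n
        simp only [Finset.mem_Icc, Finset.mem_insert]
        omega
      have h1 : (-(N:ℤ) - 2 : ℤ) ∉ insert ((N:ℤ) + 1) (Finset.Icc (-(N:ℤ) - 1) (N:ℤ)) := by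
        simp only [Finset.mem_insert, Finset.mem_Icc]
        omega
      have h2 : ((N:ℤ) + 1 : ℤ) ∉ Finset.Icc (-(N:ℤ) - 1) (N:ℤ) := by
        simp only [Finset.mem_Icc]
        omega
      have e0 : (-((N+1:ℕ):ℤ) - 1) = (-((N:ℤ)+1) - 1) := by push_cast; ring
      have e0' : ((N+1:ℕ):ℤ) = ((N:ℤ)+1) := by push_cast; ring
      rw [e0, e0', hIcc, Finset.sum_insert h1, Finset.sum_insert h2, ih,
        Finset.sum_range_succ, Finset.sum_range_succ]
      have e1 : ((-(N:ℤ) - 2 : ℤ) : ℝ) = -2 - (N:ℝ) := by push_cast; ring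
      have e2 : (((N:ℤ) + 1 : ℤ) : ℝ) = 1 + (N:ℝ) := by push_cast; ring
      rw [e1, e2]
      ring

section KeyLemma

variable {κ Δ : ℝ} (hκ : 2 ≤ κ) (hΔ : 0 < Δ)

include hκ hΔ in
lemma key_sum (a : ℝ) (ha0 : 0 ≤ a) (ha1 : a < 1) :
    ∑' n : ℤ, Fk κ Δ ((n:ℝ) + a) ≤ (∫ x : ℝ, Fk κ Δ x) + 1 / Δ ^ κ := by
  set g : ℝ → ℝ := fun x => Fk κ Δ (x + a) with hg
  have hgpos : ∀ x, 0 < g x := fun x => Fk_pos hΔ _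
  have hgint : Integrable g := (Fk_integrable hκ hΔ).comp_add_right a
  have hgeq : (∫ x : ℝ, g x) = ∫ x : ℝ, Fk κ Δ x :=
    integral_add_right_eq_self (Fk κ Δ) a
  -- bound on arbitrary finite partial sums
  have hfin : ∀ s : Finset ℤ, ∑ n ∈ s, Fk κ Δ ((n:ℝ) + a) ≤ (∫ x : ℝ, g x) + 1 / Δ ^ κ := by
    intro s
    set N : ℕ := s.sup Int.natAbs with hN
    have hsub : s ⊆ Finset.Icc (-(N:ℤ) - 1) (N:ℤ) := by
      intro n hn
      have := Finset.le_sup (f := Int.natAbs) hn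
      simp only [Finset.mem_Icc]
      omega
    have step0 : ∑ n ∈ s, Fk κ Δ ((n:ℝ) + a)
        ≤ ∑ n ∈ Finset.Icc (-(N:ℤ) - 1) (N:ℤ), g (n:ℝ) :=
      Finset.sum_le_sum_of_subset_of_nonneg hsub fun i _ _ => (hgpos _).le
    rw [sum_Icc_split g N] at step0
    -- right tail
    have hanti : AntitoneOn g (Set.Icc (0:ℝ) (0 + (N:ℕ))) := by
      intro x hx y hy hxy
      exact Fk_mono hκ hΔ (by nlinarith [hx.1, hy.1])
    have hR : (∑ i ∈ Finset.range N, g (1 + (i:ℝ))) ≤ ∫ x in (0:ℝ)..(0 + (N:ℕ)), g x := by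
      have h := hanti.sum_le_integral
      refine le_trans (le_of_eq ?_) h
      apply Finset.sum_congr rfl
      intro i _
      congr 1
      push_cast
      ring
    -- left tail
    have hmono : MonotoneOn g (Set.Icc (-(N:ℝ) - 1) (-(N:ℝ) - 1 + (N:ℕ))) := by
      intro x hx y hy hxy
      have hx2 : x ≤ -1 := by
        have := hx.2; push_cast at this; linarith
      have hy2 : y ≤ -1 := by
        have := hy.2; push_cast at this; linarith
      exact Fk_mono hκ hΔ (by nlinarith)
    have hL : (∑ i ∈ Finset.range N, g (-2 - (i:ℝ)))
        ≤ ∫ x in (-(N:ℝ) - 1)..(-(N:ℝ) - 1 + (N:ℕ)), g x := by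
      have h := hmono.sum_le_integral
      refine le_trans (le_of_eq ?_) h
      rw [← Finset.sum_range_reflect]
      apply Finset.sum_congr rfl
      intro i hi
      rw [Finset.mem_range] at hi
      congr 1
      have : ((N - 1 - i : ℕ) : ℝ) = (N:ℝ) - 1 - (i:ℝ) := by
        have h1 : i + 1 ≤ N := hi
        push_cast [Nat.cast_sub (by omega : i ≤ N - 1), Nat.cast_sub (by omega : 1 ≤ N)]
        ring
      rw [this]
      ring
    -- middle
    have hM : g (-1) + g 0 ≤ 1 / Δ ^ κ + ∫ x in (-1:ℝ)..0, g x := by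
      have hminle : ∀ x ∈ Set.Icc (-1:ℝ) 0, min (g (-1)) (g 0) ≤ g x := by
        intro x hx
        rcases le_or_gt (x + a) 0 with h | h
        · refine le_trans (min_le_left _ _) ?_
          have : g (-1) = Fk κ Δ (-1 + a) := rfl
          rw [this]
          exact Fk_mono hκ hΔ (by nlinarith [hx.1, hx.2])
        · refine le_trans (min_le_right _ _) ?_
          have : g 0 = Fk κ Δ (0 + a) := rfl
          rw [this]
          exact Fk_mono hκ hΔ (by nlinarith [hx.1, hx.2])
      have hint1 : min (g (-1)) (g 0) ≤ ∫ x in (-1:ℝ)..0, g x := by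
        have h := intervalIntegral.integral_mono_on (by norm_num : (-1:ℝ) ≤ 0)
          (intervalIntegrable_const (c := min (g (-1)) (g 0)))
          hgint.intervalIntegrable hminle
        calc min (g (-1)) (g 0) = ∫ _ in (-1:ℝ)..0, min (g (-1)) (g 0) := by
              rw [intervalIntegral.integral_const, smul_eq_mul]; ring
          _ ≤ _ := h
      have hmaxle : max (g (-1)) (g 0) ≤ 1 / Δ ^ κ :=
        max_le (Fk_le hκ hΔ _) (Fk_le hκ hΔ _)
      have := max_add_min (g (-1)) (g 0)
      linarith
    -- join the integrals
    have hadd1 : (∫ x in (-(N:ℝ) - 1)..(-1:ℝ), g x) + (∫ x in (-1:ℝ)..0, g x)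
        = ∫ x in (-(N:ℝ) - 1)..(0:ℝ), g x :=
      intervalIntegral.integral_add_adjacent_intervals
        hgint.intervalIntegrable hgint.intervalIntegrable
    have hadd2 : (∫ x in (-(N:ℝ) - 1)..(0:ℝ), g x) + (∫ x in (0:ℝ)..(N:ℝ), g x)
        = ∫ x in (-(N:ℝ) - 1)..(N:ℝ), g x :=
      intervalIntegral.integral_add_adjacent_intervals
        hgint.intervalIntegrable hgint.intervalIntegrable
    have hle : (∫ x in (-(N:ℝ) - 1)..(N:ℝ), g x) ≤ ∫ x : ℝ, g x := by
      rw [intervalIntegral.integral_of_le (by have : (0:ℝ) ≤ (N:ℝ) := Nat.cast_nonneg N; linarith : -(N:ℝ) - 1 ≤ (N:ℝ))]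
      exact setIntegral_le_integral hgint
        (Filter.Eventually.of_forall fun x => (hgpos x).le)
    have eL : -(N:ℝ) - 1 + (N:ℕ) = -1 := by ring
    have eR : (0:ℝ) + (N:ℕ) = (N:ℝ) := by ring
    rw [eL] at hL
    rw [eR] at hR
    linarith
  have hsummable : Summable fun n : ℤ => Fk κ Δ ((n:ℝ) + a) :=
    summable_of_sum_le (fun n => (Fk_pos hΔ _).le) hfin
  calc ∑' n : ℤ, Fk κ Δ ((n:ℝ) + a) ≤ (∫ x : ℝ, g x) + 1 / Δ ^ κ :=
        Summable.tsum_le_of_sum_le hsummable hfin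
    _ = (∫ x : ℝ, Fk κ Δ x) + 1 / Δ ^ κ := by rw [hgeq]

end KeyLemma

/-- Comparison of the lattice sum `∑_{n ∈ ℤ} ((n+a)² + Δ²)^{-κ/2}` with the
corresponding integral: the sum is at most `((κ+Δ)/Δ)` times the integral. -/
theorem stmt_8 (κ Δ a : ℝ) (hκ : 2 ≤ κ) (hΔ : 0 < Δ) :
    (∑' n : ℤ, 1 / (((n : ℝ) + a) ^ 2 + Δ ^ 2) ^ (κ / 2)) ≤
      (κ + Δ) / Δ * ∫ x : ℝ, 1 / (x ^ 2 + Δ ^ 2) ^ (κ / 2) := by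
  have hI : (∫ x : ℝ, 1 / (x ^ 2 + Δ ^ 2) ^ (κ / 2)) = ∫ x : ℝ, Fk κ Δ x := rfl
  -- reindex the sum to fractional part
  have hre : (∑' n : ℤ, 1 / (((n : ℝ) + a) ^ 2 + Δ ^ 2) ^ (κ / 2))
      = ∑' n : ℤ, Fk κ Δ ((n:ℝ) + Int.fract a) := by
    have h := Equiv.tsum_eq (Equiv.subRight (⌊a⌋ : ℤ)) (fun n : ℤ => Fk κ Δ ((n:ℝ) + a))
    rw [show (∑' n : ℤ, 1 / (((n : ℝ) + a) ^ 2 + Δ ^ 2) ^ (κ / 2))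
        = ∑' n : ℤ, Fk κ Δ ((n:ℝ) + a) from rfl, ← h]
    apply tsum_congr
    intro n
    congr 1
    simp only [Equiv.subRight_apply, Int.fract]
    push_cast
    ring
  rw [hre, hI]
  have hkey := key_sum hκ hΔ (Int.fract a) (Int.fract_nonneg a) (Int.fract_lt_one a)
  have hlb := Fk_integral_lb hκ hΔ
  have hInn : 0 ≤ ∫ x : ℝ, Fk κ Δ x :=
    integral_nonneg fun x => (Fk_pos hΔ x).le
  have hsplit : (κ + Δ) / Δ * (∫ x : ℝ, Fk κ Δ x)
      = (∫ x : ℝ, Fk κ Δ x) + κ / Δ * ∫ x : ℝ, Fk κ Δ x := by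
    field_simp
    ring
  rw [hsplit]
  linarith
end

section
/- Let p be a prime and let α, β, t, τ be nonnegative integers with α ≤ β and α + β = τ. Let x, y, z ∈ ℚ_p and set x′ = p^β x, y′ = p^α y, z′ = p^α z. Suppose that max(p^{−α}, |x′|_p, |y′|_p, |z′|_p) = 1 and max(p^{−2α}, |p^α x′|_p, |p^β y′|_p, |p^α z′|_p, |x′z′ − p^{β−α} (y′)²|_p) = p^{−t}. If moreover β ≥ 2, τ − 1 ≥ t + 1, and |p^{β−1} z′|_p ≤ p^{−(t+1)}, then the triples (x + 1/p, y, z) and (x − 1/p, y, z) also satisfy both displayed conditions (with the same α, β, t). -/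
section aux
variable {p : ℕ} [Fact p.Prime]

lemma pert_le {a d : ℚ_[p]} {c : ℝ} (hd : ‖d‖ < c) (ha : ‖a‖ ≤ c) : ‖a + d‖ ≤ c :=
  le_trans (Padic.nonarchimedean a d) (max_le ha hd.le)

lemma pert_eq {a d : ℚ_[p]} {c : ℝ} (hd : ‖d‖ < c) (ha : ‖a‖ = c) : ‖a + d‖ = c := by
  have hlt : ‖d‖ < ‖a‖ := ha ▸ hd
  rw [Padic.add_eq_max_of_ne (ne_of_gt hlt), max_eq_left hlt.le, ha]

lemma max4_perturb {P Y Z c : ℝ} {a d : ℚ_[p]} (hd : ‖d‖ < c)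
    (h : max (max P ‖a‖) (max Y Z) = c) :
    max (max P ‖a + d‖) (max Y Z) = c := by
  have hle := h.le
  rw [max_le_iff, max_le_iff] at hle
  obtain ⟨⟨hP, ha⟩, hYZ⟩ := hle
  apply le_antisymm (max_le (max_le hP (pert_le hd ha)) hYZ)
  rcases le_or_gt c (max Y Z) with hc | hc
  · exact le_max_of_le_right hc
  rcases le_or_gt c P with hc2 | hc2
  · exact le_max_of_le_left (le_max_of_le_left hc2)
  have haa : ‖a‖ = c := by
    refine le_antisymm ha ?_
    by_contra hcon
    push_neg at hcon
    exact absurd h (ne_of_lt (max_lt (max_lt hc2 hcon) hc))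
  exact le_max_of_le_left (le_max_of_le_right (pert_eq hd haa).ge)

lemma max5_perturb {A C D c : ℝ} {a d b e : ℚ_[p]} (hd : ‖d‖ < c) (he : ‖e‖ < c)
    (h : max (max A (max ‖a‖ C)) (max D ‖b‖) = c) :
    max (max A (max ‖a + d‖ C)) (max D ‖b + e‖) = c := by
  have hle := h.le
  rw [max_le_iff, max_le_iff, max_le_iff, max_le_iff] at hle
  obtain ⟨⟨hA, ha, hC⟩, hD, hb⟩ := hle
  apply le_antisymm
    (max_le (max_le hA (max_le (pert_le hd ha) hC)) (max_le hD (pert_le he hb)))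
  rcases le_or_gt c A with h1 | h1
  · exact le_max_of_le_left (le_max_of_le_left h1)
  rcases le_or_gt c C with h2 | h2
  · exact le_max_of_le_left (le_max_of_le_right (le_max_of_le_right h2))
  rcases le_or_gt c D with h3 | h3
  · exact le_max_of_le_right (le_max_of_le_left h3)
  rcases le_or_gt c ‖a‖ with h4 | h4
  · exact le_max_of_le_left (le_max_of_le_right
      (le_max_of_le_left (pert_eq hd (le_antisymm ha h4)).ge))
  have hbb : ‖b‖ = c := by
    refine le_antisymm hb ?_
    by_contra hcon
    push_neg at hcon
    exact absurd h (ne_of_lt (max_lt (max_lt h1 (max_lt h4 h2)) (max_lt h3 hcon)))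
  exact le_max_of_le_right (le_max_of_le_right (pert_eq he hbb).ge)

end aux



/-- The support conditions for the Hecke cell of `GSp(4, ℚ_p)` with parameters
`(t, τ)`, in terms of `x′ = p^β x`, `y′ = p^α y`, `z′ = p^α z`: the fractional ideal
generated by `{p^α, x′, y′, z′}` is `ℤ_p` and the one generated by
`{p^{2α}, p^α x′, p^β y′, p^α z′, x′z′ − p^{β−α}(y′)²}` is `p^t ℤ_p`. -/
def HeckeCellCond (p : ℕ) [Fact p.Prime] (α β t : ℕ) (x y z : ℚ_[p]) : Prop :=
  max (max ((p : ℝ) ^ (-(α : ℤ))) ‖(p : ℚ_[p]) ^ β * x‖)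
      (max ‖(p : ℚ_[p]) ^ α * y‖ ‖(p : ℚ_[p]) ^ α * z‖) = 1 ∧
  max (max ((p : ℝ) ^ (-(2 * α : ℤ)))
        (max ‖(p : ℚ_[p]) ^ α * ((p : ℚ_[p]) ^ β * x)‖
             ‖(p : ℚ_[p]) ^ β * ((p : ℚ_[p]) ^ α * y)‖))
      (max ‖(p : ℚ_[p]) ^ α * ((p : ℚ_[p]) ^ α * z)‖
           ‖(p : ℚ_[p]) ^ β * x * ((p : ℚ_[p]) ^ α * z) -
              (p : ℚ_[p]) ^ (β - α) * ((p : ℚ_[p]) ^ α * y) ^ 2‖) = (p : ℝ) ^ (-(t : ℤ))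

lemma cond_perturb {p : ℕ} [Fact p.Prime] {α β t : ℕ} {x y z : ℚ_[p]} (δ : ℚ_[p])
    (hcond : HeckeCellCond p α β t x y z)
    (hd1 : ‖(p:ℚ_[p])^β * δ‖ < 1)
    (hd2 : ‖(p:ℚ_[p])^α * ((p:ℚ_[p])^β * δ)‖ < (p:ℝ)^(-(t:ℤ)))
    (hd3 : ‖(p:ℚ_[p])^β * δ * ((p:ℚ_[p])^α * z)‖ < (p:ℝ)^(-(t:ℤ))) :
    HeckeCellCond p α β t (x + δ) y z := by
  obtain ⟨h1, h2⟩ := hcond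
  constructor
  · have e : (p:ℚ_[p])^β * (x+δ) = (p:ℚ_[p])^β * x + (p:ℚ_[p])^β * δ := by ring
    rw [e]
    exact max4_perturb hd1 h1
  · have e1 : (p:ℚ_[p])^α * ((p:ℚ_[p])^β * (x+δ))
        = (p:ℚ_[p])^α * ((p:ℚ_[p])^β * x) + (p:ℚ_[p])^α * ((p:ℚ_[p])^β * δ) := by ring
    have e2 : (p:ℚ_[p])^β * (x+δ) * ((p:ℚ_[p])^α * z) - (p:ℚ_[p])^(β-α) * ((p:ℚ_[p])^α * y)^2
        = ((p:ℚ_[p])^β * x * ((p:ℚ_[p])^α * z) - (p:ℚ_[p])^(β-α) * ((p:ℚ_[p])^α * y)^2)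
          + (p:ℚ_[p])^β * δ * ((p:ℚ_[p])^α * z) := by ring
    rw [e1, e2]
    exact max5_perturb hd2 hd3 h2

/-- If `(x, y, z)` satisfies the Hecke cell conditions, `β ≥ 2`, `τ − 1 ≥ t + 1`
and `|p^{β−1} z′|_p ≤ p^{−(t+1)}`, then `(x ± 1/p, y, z)` also satisfy them. -/
theorem stmt_10 (p : ℕ) [Fact p.Prime] (α β t τ : ℕ) (hab : α ≤ β)
    (hsum : α + β = τ) (x y z : ℚ_[p])
    (hcond : HeckeCellCond p α β t x y z)
    (hβ : 2 ≤ β) (hτ : t + 2 ≤ τ)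
    (hz : ‖(p : ℚ_[p]) ^ (β - 1) * ((p : ℚ_[p]) ^ α * z)‖ ≤ (p : ℝ) ^ (-(t + 1 : ℤ))) :
    HeckeCellCond p α β t (x + 1 / (p : ℚ_[p])) y z ∧
      HeckeCellCond p α β t (x - 1 / (p : ℚ_[p])) y z := by
  have hp1 : (1:ℝ) < p := by exact_mod_cast (Fact.out : p.Prime).one_lt
  have hp0 : (p:ℚ_[p]) ≠ 0 := by
    exact_mod_cast Nat.cast_ne_zero.mpr (Fact.out : p.Prime).ne_zero
  have hpow : (p:ℚ_[p])^β * (1/p) = (p:ℚ_[p])^(β-1) := by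
    rw [one_div]
    conv_lhs => rw [show β = (β-1)+1 by omega]
    rw [pow_succ, mul_assoc, mul_inv_cancel₀ hp0, mul_one]
  have hd1 : ‖(p:ℚ_[p])^β * (1/p)‖ < 1 := by
    rw [hpow, Padic.norm_p_pow]
    calc (p:ℝ) ^ (-((β-1:ℕ):ℤ)) < (p:ℝ) ^ (0:ℤ) := by
          apply zpow_lt_zpow_right₀ hp1; omega
      _ = 1 := zpow_zero _
  have hd2 : ‖(p:ℚ_[p])^α * ((p:ℚ_[p])^β * (1/p))‖ < (p:ℝ)^(-(t:ℤ)) := by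
    rw [hpow, ← pow_add, Padic.norm_p_pow]
    apply zpow_lt_zpow_right₀ hp1; omega
  have hd3 : ‖(p:ℚ_[p])^β * (1/p) * ((p:ℚ_[p])^α * z)‖ < (p:ℝ)^(-(t:ℤ)) := by
    rw [hpow]
    refine lt_of_le_of_lt hz ?_
    apply zpow_lt_zpow_right₀ hp1; omega
  refine ⟨cond_perturb _ hcond hd1 hd2 hd3, ?_⟩
  rw [sub_eq_add_neg]
  refine cond_perturb _ hcond ?_ ?_ ?_ <;>
    simpa only [mul_neg, neg_mul, norm_neg] using (by assumption : _)
end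

section
/- Let n ≥ 1, let r > 0 be real, and let M ∈ M_{2n}(ℝ) satisfy ᵀM·J·M = r·J. Write M in n×n blocks as M = [[A, B],[C, D]]. Then |det(A + D + i(B − C))|² = det(2r·Iₙ + A·ᵀA + B·ᵀB + C·ᵀC + D·ᵀD + i(A·ᵀC − C·ᵀA + B·ᵀD − D·ᵀB)), where the determinants are complex determinants; in particular the right-hand determinant is a nonnegative real number. -/
open Matrix

/-- For `M = [[A,B],[C,D]] ∈ GSp_{2n}(ℝ)` with similitude `r > 0`,
`|det(A + D + i(B − C))|²
  = det(2r·Iₙ + AᵀA + BᵀB + CᵀC + DᵀD + i(AᵀC − CᵀA + BᵀD − DᵀB))`. -/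
theorem stmt_11 (n : ℕ) (hn : 1 ≤ n) (r : ℝ) (hr : 0 < r)
    (A B C D : Matrix (Fin n) (Fin n) ℝ)
    (hM : (Matrix.fromBlocks A B C D)ᵀ *
          Matrix.fromBlocks (0 : Matrix (Fin n) (Fin n) ℝ) 1 (-1) 0 *
          Matrix.fromBlocks A B C D =
        r • Matrix.fromBlocks (0 : Matrix (Fin n) (Fin n) ℝ) 1 (-1) 0) :
    ((‖(((A + D).map (fun x => (x : ℂ)) +
          Complex.I • (B - C).map (fun x => (x : ℂ))).det)‖) ^ 2 : ℂ) =
      (((2 * r) • (1 : Matrix (Fin n) (Fin n) ℝ) +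
          A * Aᵀ + B * Bᵀ + C * Cᵀ + D * Dᵀ).map (fun x => (x : ℂ)) +
        Complex.I •
          (A * Cᵀ - C * Aᵀ + B * Dᵀ - D * Bᵀ).map (fun x => (x : ℂ))).det := by
  set J : Matrix (Fin n ⊕ Fin n) (Fin n ⊕ Fin n) ℝ := Matrix.fromBlocks 0 1 (-1) 0 with hJ
  set M := Matrix.fromBlocks A B C D with hMdef
  have hJ2 : J * J = -1 := by
    rw [hJ, Matrix.fromBlocks_multiply]
    simp [Matrix.fromBlocks_neg, ← Matrix.fromBlocks_one]
  have hNM : ((r⁻¹ • (-J * Mᵀ * J)) * M) = 1 := by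
    rw [Matrix.smul_mul]
    have : -J * Mᵀ * J * M = r • 1 := by
      calc -J * Mᵀ * J * M = -J * (Mᵀ * J * M) := by noncomm_ring
      _ = -J * (r • J) := by rw [hM]
      _ = r • (-(J*J)) := by rw [Matrix.mul_smul, neg_mul, smul_neg]
      _ = r • 1 := by rw [hJ2]; simp
    rw [this, smul_smul, inv_mul_cancel₀ hr.ne', one_smul]
  have hMN := mul_eq_one_comm.mpr hNM
  have h5 : M * J * Mᵀ = r • J := by
    have h4 : M * (-J * Mᵀ * J) = r • 1 := by
      have := congrArg (r • ·) hMN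
      simpa [Matrix.mul_smul, smul_smul, mul_inv_cancel₀ hr.ne'] using this
    have h6 : M * (-J * Mᵀ * J) * (-J) = (r • 1) * (-J) := by rw [h4]
    have h7 : M * (-J * Mᵀ * J) * (-J) = -(M * J * Mᵀ) * (J * -J) := by noncomm_ring
    rw [h7] at h6
    have : J * -J = 1 := by rw [mul_neg, hJ2]; simp
    rw [this, mul_one, Matrix.smul_mul, one_mul] at h6
    have := congrArg (-·) h6
    simpa using this
  rw [hMdef, hJ, Matrix.fromBlocks_multiply, Matrix.fromBlocks_transpose,
    Matrix.fromBlocks_multiply, Matrix.fromBlocks_smul] at h5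
  simp only [Matrix.mul_zero, Matrix.zero_mul, add_zero, zero_add, mul_one, one_mul,
    Matrix.mul_one, Matrix.one_mul, mul_neg, neg_mul, Matrix.mul_neg, Matrix.neg_mul,
    smul_zero, smul_neg] at h5
  obtain ⟨e1, e2, e3, e4⟩ := Matrix.fromBlocks_inj.mp h5
  clear hM hNM hMN h5 hJ2
  -- complexify
  set f : ℝ →+* ℂ := Complex.ofRealHom with hf
  set A' := A.map f with hA'
  set B' := B.map f with hB'
  set C' := C.map f with hC'
  set D' := D.map f with hD'
  have mapsmul1 : ∀ s : ℝ, f.mapMatrix (s • (1 : Matrix (Fin n) (Fin n) ℝ))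
      = (s : ℂ) • (1 : Matrix (Fin n) (Fin n) ℂ) := by
    intro s
    ext i j
    simp only [RingHom.mapMatrix_apply, Matrix.map_apply, Matrix.smul_apply,
      Matrix.one_apply, smul_eq_mul, mul_ite, mul_one, mul_zero, hf]
    split <;> simp
  have k1 : B' * A'ᵀ = A' * B'ᵀ := by
    have h := congrArg (f.mapMatrix ·) e1
    simp only [map_add, map_neg, _root_.map_mul, map_zero, RingHom.mapMatrix_apply,
      Matrix.transpose_map] at h
    exact neg_add_eq_zero.mp h
  have k4 : D' * C'ᵀ = C' * D'ᵀ := by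
    have h := congrArg (f.mapMatrix ·) e4
    simp only [map_add, map_neg, _root_.map_mul, map_zero, RingHom.mapMatrix_apply,
      Matrix.transpose_map] at h
    exact neg_add_eq_zero.mp h
  have k2 : A' * D'ᵀ = (r : ℂ) • 1 + B' * C'ᵀ := by
    have h := congrArg (f.mapMatrix ·) e2
    simp only [map_add, map_neg, _root_.map_mul, RingHom.mapMatrix_apply,
      Matrix.transpose_map, mapsmul1] at h
    rw [← h]; abel
  have k3 : D' * A'ᵀ = (r : ℂ) • 1 + C' * B'ᵀ := by
    have h := congrArg (f.mapMatrix ·) e3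
    simp only [map_add, map_neg, _root_.map_mul, RingHom.mapMatrix_apply,
      Matrix.transpose_map, mapsmul1] at h
    have h2 := congrArg Neg.neg h
    simp only [neg_neg, neg_add] at h2
    rw [← h2]; abel
  -- the key matrix identity
  set P : Matrix (Fin n) (Fin n) ℂ := (A' + D') + Complex.I • (B' - C') with hP
  set Pc : Matrix (Fin n) (Fin n) ℂ := (A' + D') - Complex.I • (B' - C') with hPc
  have key : ((2 * r) • (1 : Matrix (Fin n) (Fin n) ℝ) +
          A * Aᵀ + B * Bᵀ + C * Cᵀ + D * Dᵀ).map (fun x => (x : ℂ)) +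
        Complex.I •
          (A * Cᵀ - C * Aᵀ + B * Dᵀ - D * Bᵀ).map (fun x => (x : ℂ)) = P * Pcᵀ := by
    have lhs_eq : ((2 * r) • (1 : Matrix (Fin n) (Fin n) ℝ) +
          A * Aᵀ + B * Bᵀ + C * Cᵀ + D * Dᵀ).map (fun x => (x : ℂ)) +
        Complex.I • (A * Cᵀ - C * Aᵀ + B * Dᵀ - D * Bᵀ).map (fun x => (x : ℂ))
        = ((2 * r : ℝ) : ℂ) • 1 + A' * A'ᵀ + B' * B'ᵀ + C' * C'ᵀ + D' * D'ᵀ +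
          Complex.I • (A' * C'ᵀ - C' * A'ᵀ + B' * D'ᵀ - D' * B'ᵀ) := by
      have : ∀ X : Matrix (Fin n) (Fin n) ℝ, X.map (fun x => (x : ℂ)) = f.mapMatrix X :=
        fun _ => rfl
      rw [this, this]
      simp only [map_add, map_sub, _root_.map_mul, RingHom.mapMatrix_apply,
        Matrix.transpose_map, mapsmul1]
      rfl
    rw [lhs_eq]
    rw [hP, hPc]
    rw [Matrix.transpose_sub, Matrix.transpose_add, Matrix.transpose_smul,
      Matrix.transpose_sub]
    simp only [Matrix.add_mul, Matrix.mul_add, Matrix.sub_mul, Matrix.mul_sub,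
      Matrix.smul_mul, Matrix.mul_smul, smul_smul, Complex.I_mul_I, neg_smul, one_smul,
      smul_sub, smul_add]
    rw [k1, k2, k3, k4]
    push_cast
    module
  rw [key]
  -- conjugate relation
  have hPc_conj : Pc = P.map (starRingEnd ℂ) := by
    ext i j
    simp [hP, hPc, Matrix.map_apply, Matrix.add_apply, Matrix.sub_apply,
      Matrix.smul_apply, hA', hB', hC', hD', hf, Complex.conj_ofReal, smul_eq_mul]
    ring
  have hdet : (P * Pcᵀ).det = P.det * (starRingEnd ℂ) P.det := by
    rw [Matrix.det_mul, Matrix.det_transpose, hPc_conj]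
    rw [show P.map ⇑(starRingEnd ℂ) = (starRingEnd ℂ).mapMatrix P from rfl, ← RingHom.map_det]
  rw [hdet, Complex.mul_conj, ← Complex.sq_norm]
  have hPgoal : ((A + D).map (fun x => (x : ℂ)) +
      Complex.I • (B - C).map (fun x => (x : ℂ))) = P := by
    rw [show (A + D).map (fun x => (x : ℂ)) = f.mapMatrix (A + D) from rfl,
      show (B - C).map (fun x => (x : ℂ)) = f.mapMatrix (B - C) from rfl,
      map_add, map_sub, hP]
    rfl
  rw [hPgoal]
  push_cast
  ring
end

section
/- Let n ≥ 1, let r > 0 be real, and let M ∈ M_{2n}(ℝ) satisfy ᵀM·J·M = r·J. Write M in n×n blocks as M = [[A, B],[C, D]]. Then |det(A + D + i(B − C))| ≥ 2ⁿ · r^{n/2}, where the determinant is the complex determinant. -/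
open Matrix

section Aux

open Finset ComplexOrder

private lemma aux_key {n : ℕ} (s : ℂ) (a b c d : Matrix (Fin n) (Fin n) ℂ)
    (h1 : aᵀ * c = cᵀ * a) (h2 : aᵀ * d = cᵀ * b + s • 1)
    (h3 : dᵀ * a = bᵀ * c + s • 1) (h4 : bᵀ * d = dᵀ * b) :
    (aᵀ + dᵀ - Complex.I • (bᵀ - cᵀ)) * (a + d + Complex.I • (b - c)) =
    (aᵀ - dᵀ - Complex.I • (bᵀ + cᵀ)) * (a - d + Complex.I • (b + c)) + ((4:ℂ) * s) • 1 := by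
  simp only [mul_add, add_mul, sub_mul, mul_sub, smul_mul_assoc, mul_smul_comm, smul_smul,
    Complex.I_mul_I, smul_sub, smul_add, neg_smul, one_smul]
  rw [h1, h2, h3, h4]
  module

private lemma aux_det_bound {n : ℕ} (Q : Matrix (Fin n) (Fin n) ℂ) (c : ℝ) (hc : 0 ≤ c) :
    c ^ n ≤ ‖((Qᴴ * Q + (c : ℂ) • 1).det)‖ := by
  set K : Matrix (Fin n) (Fin n) ℂ := Qᴴ * Q + (c : ℂ) • 1 with hKdef
  have hQ : (Qᴴ * Q).PosSemidef := posSemidef_conjTranspose_mul_self Q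
  have hK : K.IsHermitian := by
    refine hQ.1.add ?_
    simp [Matrix.IsHermitian, Matrix.conjTranspose_smul, Complex.star_def]
  have heig : ∀ i, c ≤ hK.eigenvalues i := by
    intro i
    rw [hK.eigenvalues_eq]
    set v := ⇑(hK.eigenvectorBasis i) with hvdef
    have hv : (star v) ⬝ᵥ v = 1 := by
      have h1 := hK.eigenvectorBasis.orthonormal.1 i
      have h2 := EuclideanSpace.inner_eq_star_dotProduct (hK.eigenvectorBasis i)
        (hK.eigenvectorBasis i)
      rw [inner_self_eq_norm_sq_to_K, h1] at h2
      rw [hvdef, dotProduct_comm]; simpa using h2.symm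
    have hmul : K *ᵥ v = (Qᴴ * Q) *ᵥ v + (c : ℂ) • v := by
      simp [hKdef, Matrix.add_mulVec, Matrix.smul_mulVec]
    rw [hmul, dotProduct_add]
    have h5 : star v ⬝ᵥ ((c:ℂ) • v) = (c:ℂ) * (star v ⬝ᵥ v) := by
      simp [dotProduct_smul, smul_eq_mul]
    rw [h5, hv, map_add]
    have h0 := hQ.re_dotProduct_nonneg v
    simp only [mul_one, RCLike.ofReal_re] at *
    have hre : RCLike.re ((c:ℂ)) = c := by simp [RCLike.ofReal_re]
    linarith [h0]
  have hdet : K.det = ((∏ i, hK.eigenvalues i : ℝ) : ℂ) := by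
    rw [hK.det_eq_prod_eigenvalues]; norm_cast
  rw [hdet]
  rw [Complex.norm_real, Real.norm_eq_abs, abs_of_nonneg (Finset.prod_nonneg (fun i _ => hc.trans (heig i)))]
  calc c ^ n = ∏ _i : Fin n, c := by simp
    _ ≤ ∏ i, hK.eigenvalues i := Finset.prod_le_prod (fun i _ => hc) (fun i _ => heig i)

private lemma aux_map_mul {n : ℕ} (X Y : Matrix (Fin n) (Fin n) ℝ) :
    (X * Y).map (fun x => (x:ℂ)) = X.map (fun x => (x:ℂ)) * Y.map (fun x => (x:ℂ)) := by
  ext i j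
  simp [Matrix.mul_apply, Matrix.map_apply]

private lemma aux_map_add {n : ℕ} (X Y : Matrix (Fin n) (Fin n) ℝ) :
    (X + Y).map (fun x => (x:ℂ)) = X.map (fun x => (x:ℂ)) + Y.map (fun x => (x:ℂ)) := by
  ext i j
  simp [Matrix.map_apply]

private lemma aux_map_sub {n : ℕ} (X Y : Matrix (Fin n) (Fin n) ℝ) :
    (X - Y).map (fun x => (x:ℂ)) = X.map (fun x => (x:ℂ)) - Y.map (fun x => (x:ℂ)) := by
  ext i j
  simp [Matrix.map_apply]

private lemma aux_map_smul_one {n : ℕ} (r : ℝ) :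
    ((r • (1 : Matrix (Fin n) (Fin n) ℝ)).map (fun x => (x:ℂ)))
      = (r : ℂ) • (1 : Matrix (Fin n) (Fin n) ℂ) := by
  ext i j
  simp [Matrix.map_apply, Matrix.one_apply]
  split_ifs <;> simp

private lemma aux_map_transpose {n : ℕ} (X : Matrix (Fin n) (Fin n) ℝ) :
    (Xᵀ).map (fun x => (x:ℂ)) = (X.map (fun x => (x:ℂ)))ᵀ := rfl

end Aux

/-- For `M = [[A,B],[C,D]] ∈ GSp_{2n}(ℝ)` with similitude `r > 0`, one has
`|det(A + D + i(B − C))| ≥ 2ⁿ·r^{n/2}`. -/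
theorem stmt_12 (n : ℕ) (hn : 1 ≤ n) (r : ℝ) (hr : 0 < r)
    (A B C D : Matrix (Fin n) (Fin n) ℝ)
    (hM : (Matrix.fromBlocks A B C D)ᵀ *
          Matrix.fromBlocks (0 : Matrix (Fin n) (Fin n) ℝ) 1 (-1) 0 *
          Matrix.fromBlocks A B C D =
        r • Matrix.fromBlocks (0 : Matrix (Fin n) (Fin n) ℝ) 1 (-1) 0) :
    (2 : ℝ) ^ n * r ^ ((n : ℝ) / 2) ≤
      ‖(((A + D).map (fun x => (x : ℂ)) +
          Complex.I • (B - C).map (fun x => (x : ℂ))).det)‖ := by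
  -- extract block relations
  rw [fromBlocks_transpose, fromBlocks_multiply, fromBlocks_multiply, fromBlocks_smul,
    fromBlocks_inj] at hM
  obtain ⟨h1, h2, h3, h4⟩ := hM
  simp only [Matrix.mul_zero, Matrix.mul_one, Matrix.mul_neg, Matrix.zero_mul, Matrix.neg_mul,
    add_zero, zero_add, smul_zero] at h1 h2 h3 h4
  rw [neg_add_eq_sub, sub_eq_zero] at h1 h4
  rw [neg_add_eq_sub, sub_eq_iff_eq_add'] at h2
  have hR2 : Aᵀ * D = Cᵀ * B + r • 1 := h2
  have hR3 : Dᵀ * A = Bᵀ * C + r • 1 := by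
    have := congrArg Matrix.transpose hR2
    simpa [Matrix.transpose_mul, Matrix.transpose_smul] using this
  -- move to ℂ
  set f : ℝ → ℂ := fun x => (x : ℂ) with hf
  set a := A.map f
  set b := B.map f
  set c := C.map f
  set d := D.map f
  have hmap : ∀ X Y : Matrix (Fin n) (Fin n) ℝ, X = Y → X.map f = Y.map f := by
    intro X Y h; rw [h]
  have hc1 : aᵀ * c = cᵀ * a := by
    have := hmap _ _ h1
    rwa [aux_map_mul, aux_map_mul, aux_map_transpose, aux_map_transpose] at this
  have hc2 : aᵀ * d = cᵀ * b + (r : ℂ) • 1 := by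
    have := hmap _ _ hR2
    rwa [aux_map_mul, aux_map_add, aux_map_mul, aux_map_smul_one, aux_map_transpose,
      aux_map_transpose] at this
  have hc3 : dᵀ * a = bᵀ * c + (r : ℂ) • 1 := by
    have := hmap _ _ hR3
    rwa [aux_map_mul, aux_map_add, aux_map_mul, aux_map_smul_one, aux_map_transpose,
      aux_map_transpose] at this
  have hc4 : bᵀ * d = dᵀ * b := by
    have := hmap _ _ h4
    rwa [aux_map_mul, aux_map_mul, aux_map_transpose, aux_map_transpose] at this
  -- P and Q and their conjugate transposes
  set P : Matrix (Fin n) (Fin n) ℂ := (A + D).map f + Complex.I • (B - C).map f with hPdef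
  set Q : Matrix (Fin n) (Fin n) ℂ := (A - D).map f + Complex.I • (B + C).map f with hQdef
  have hPeq : P = a + d + Complex.I • (b - c) := by
    rw [hPdef, aux_map_add, aux_map_sub]
  have hQeq : Q = a - d + Complex.I • (b + c) := by
    rw [hQdef, aux_map_sub, aux_map_add]
  have hPH : Pᴴ = aᵀ + dᵀ - Complex.I • (bᵀ - cᵀ) := by
    rw [hPeq]
    ext i j
    simp [Matrix.conjTranspose_apply, Matrix.map_apply, Matrix.smul_apply, Matrix.add_apply,
      Matrix.sub_apply, Matrix.transpose_apply, map_add, _root_.map_mul, Complex.conj_ofReal,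
      Complex.conj_I, a, b, c, d, f]
    ring
  have hQH : Qᴴ = aᵀ - dᵀ - Complex.I • (bᵀ + cᵀ) := by
    rw [hQeq]
    ext i j
    simp [Matrix.conjTranspose_apply, Matrix.map_apply, Matrix.smul_apply, Matrix.add_apply,
      Matrix.sub_apply, Matrix.transpose_apply, map_add, _root_.map_mul, Complex.conj_ofReal,
      Complex.conj_I, a, b, c, d, f]
    ring
  have hkey : Pᴴ * P = Qᴴ * Q + (((4 * r : ℝ)) : ℂ) • 1 := by
    rw [hPH, hPeq, hQH, hQeq, aux_key (r : ℂ) a b c d hc1 hc2 hc3 hc4]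
    norm_cast
  -- determinant bound
  have hbound : (4 * r) ^ n ≤ ‖((Pᴴ * P).det)‖ := by
    rw [hkey]
    exact aux_det_bound Q (4 * r) (by positivity)
  have habs : ‖((Pᴴ * P).det)‖ = ‖P.det‖ ^ 2 := by
    rw [Matrix.det_mul, Matrix.det_conjTranspose, norm_mul, Complex.star_def,
      Complex.norm_conj]
    ring
  rw [habs] at hbound
  -- final arithmetic
  have hs0 : (0:ℝ) ≤ (2 : ℝ) ^ n * r ^ ((n : ℝ) / 2) := by positivity
  have ht0 : (0:ℝ) ≤ ‖P.det‖ := norm_nonneg _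
  have hsq : ((2 : ℝ) ^ n * r ^ ((n : ℝ) / 2)) ^ 2 = (4 * r) ^ n := by
    have e1 : ((r : ℝ) ^ ((n : ℝ) / 2)) ^ 2 = r ^ n := by
      rw [← Real.rpow_natCast (r ^ ((n : ℝ) / 2)) 2, ← Real.rpow_mul hr.le,
        show ((n : ℝ) / 2 * ((2 : ℕ) : ℝ)) = (n : ℝ) by push_cast; ring,
        Real.rpow_natCast]
    have e2 : ((2 : ℝ) ^ n) ^ 2 = 4 ^ n := by
      rw [← pow_mul, mul_comm, pow_mul]; norm_num
    calc ((2 : ℝ) ^ n * r ^ ((n : ℝ) / 2)) ^ 2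
        = ((2 : ℝ) ^ n) ^ 2 * ((r : ℝ) ^ ((n : ℝ) / 2)) ^ 2 := by ring
      _ = 4 ^ n * r ^ n := by rw [e1, e2]
      _ = (4 * r) ^ n := (mul_pow 4 r n).symm
  nlinarith [hbound, hs0, ht0, hsq]
end

section
/- Let r > 0 be real and let M ∈ M₄(ℝ) satisfy ᵀM·J·M = r·J, where J = [[0, I₂],[−I₂, 0]]. Write M in 2×2 blocks as M = [[A, B],[C, D]]. Then |det(A + D + i(B − C))|² ≥ 2r·(2r + ∑_{i,j=1}^{4} M_{ij}²), where M_{ij} are the entries of M and the determinant is the complex determinant. -/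
open Matrix

set_option maxHeartbeats 2000000 in
/-- For `M = [[A,B],[C,D]] ∈ GSp₄(ℝ)` with similitude `r > 0`,
`|det(A + D + i(B − C))|² ≥ 2r·(2r + ∑_{i,j} M_{ij}²)`. -/
theorem stmt_13 (r : ℝ) (hr : 0 < r)
    (A B C D : Matrix (Fin 2) (Fin 2) ℝ)
    (hM : (Matrix.fromBlocks A B C D)ᵀ *
          Matrix.fromBlocks (0 : Matrix (Fin 2) (Fin 2) ℝ) 1 (-1) 0 *
          Matrix.fromBlocks A B C D =
        r • Matrix.fromBlocks (0 : Matrix (Fin 2) (Fin 2) ℝ) 1 (-1) 0) :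
    2 * r * (2 * r +
        ∑ i : Fin 2 ⊕ Fin 2, ∑ j : Fin 2 ⊕ Fin 2, (Matrix.fromBlocks A B C D) i j ^ 2) ≤
      ‖((A + D).map (fun x => (x : ℂ)) +
          Complex.I • (B - C).map (fun x => (x : ℂ))).det‖ ^ 2 := by
  have h00 := congrFun (congrFun hM (Sum.inl 0)) (Sum.inr 0)
  have h01 := congrFun (congrFun hM (Sum.inl 0)) (Sum.inr 1)
  have h10 := congrFun (congrFun hM (Sum.inl 1)) (Sum.inr 0)
  have h11 := congrFun (congrFun hM (Sum.inl 1)) (Sum.inr 1)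
  have hG1 := congrFun (congrFun hM (Sum.inl 0)) (Sum.inl 1)
  have hG2 := congrFun (congrFun hM (Sum.inr 0)) (Sum.inr 1)
  simp only [Matrix.mul_apply, Matrix.fromBlocks, Matrix.transpose_apply,
    Fintype.sum_sum_type, Fin.sum_univ_two, Matrix.smul_apply, Matrix.of_apply,
    Sum.elim_inl, Sum.elim_inr, Matrix.zero_apply, Matrix.one_apply, Matrix.neg_apply,
    smul_eq_mul] at h00 h01 h10 h11 hG1 hG2
  norm_num at h00 h01 h10 h11 hG1 hG2
  have habs : ‖((A + D).map (fun x => (x : ℂ)) +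
          Complex.I • (B - C).map (fun x => (x : ℂ))).det‖ ^ 2 =
      (-1 * D 0 1 * D 1 0 + D 0 0 * D 1 1 + C 0 1 * C 1 0 + -1 * C 0 0 * C 1 1 + B 1 1 * C 0 0 + -1 * B 1 0 * C 0 1 + -1 * B 0 1 * C 1 0 + B 0 1 * B 1 0 + B 0 0 * C 1 1 + -1 * B 0 0 * B 1 1 + A 1 1 * D 0 0 + -1 * A 1 0 * D 0 1 + -1 * A 0 1 * D 1 0 + -1 * A 0 1 * A 1 0 + A 0 0 * D 1 1 + A 0 0 * A 1 1) ^ 2 + (-1 * C 1 1 * D 0 0 + C 1 0 * D 0 1 + C 0 1 * D 1 0 + -1 * C 0 0 * D 1 1 + B 1 1 * D 0 0 + -1 * B 1 0 * D 0 1 + -1 * B 0 1 * D 1 0 + B 0 0 * D 1 1 + -1 * A 1 1 * C 0 0 + A 1 1 * B 0 0 + A 1 0 * C 0 1 + -1 * A 1 0 * B 0 1 + A 0 1 * C 1 0 + -1 * A 0 1 * B 1 0 + -1 * A 0 0 * C 1 1 + A 0 0 * B 1 1) ^ 2 := by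
    rw [Matrix.det_fin_two, Complex.sq_norm, Complex.normSq_apply]
    simp only [Matrix.add_apply, Matrix.smul_apply, Matrix.map_apply, Matrix.sub_apply,
      Complex.add_re, Complex.add_im, Complex.mul_re, Complex.mul_im, Complex.sub_re,
      Complex.sub_im, Complex.I_re, Complex.I_im, Complex.ofReal_re, Complex.ofReal_im,
      smul_eq_mul]
    ring
  rw [habs]
  have key : (-1 * D 0 1 * D 1 0 + D 0 0 * D 1 1 + C 0 1 * C 1 0 + -1 * C 0 0 * C 1 1 + B 1 1 * C 0 0 + -1 * B 1 0 * C 0 1 + -1 * B 0 1 * C 1 0 + B 0 1 * B 1 0 + B 0 0 * C 1 1 + -1 * B 0 0 * B 1 1 + A 1 1 * D 0 0 + -1 * A 1 0 * D 0 1 + -1 * A 0 1 * D 1 0 + -1 * A 0 1 * A 1 0 + A 0 0 * D 1 1 + A 0 0 * A 1 1) ^ 2 + (-1 * C 1 1 * D 0 0 + C 1 0 * D 0 1 + C 0 1 * D 1 0 + -1 * C 0 0 * D 1 1 + B 1 1 * D 0 0 + -1 * B 1 0 * D 0 1 + -1 * B 0 1 * D 1 0 + B 0 0 * D 1 1 +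 -1 * A 1 1 * C 0 0 + A 1 1 * B 0 0 + A 1 0 * C 0 1 + -1 * A 1 0 * B 0 1 + A 0 1 * C 1 0 + -1 * A 0 1 * B 1 0 + -1 * A 0 0 * C 1 1 + A 0 0 * B 1 1) ^ 2 =
      2 * r * (2 * r + (D 1 1 * D 1 1 + D 1 0 * D 1 0 + D 0 1 * D 0 1 + D 0 0 * D 0 0 + C 1 1 * C 1 1 + C 1 0 * C 1 0 + C 0 1 * C 0 1 + C 0 0 * C 0 0 + B 1 1 * B 1 1 + B 1 0 * B 1 0 + B 0 1 * B 0 1 + B 0 0 * B 0 0 + A 1 1 * A 1 1 + A 1 0 * A 1 0 + A 0 1 * A 0 1 + A 0 0 * A 0 0)) +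
      ((D 0 1 * D 1 0 + -1 * D 0 0 * D 1 1 + -1 * C 0 1 * C 1 0 + C 0 0 * C 1 1 + B 0 1 * B 1 0 + -1 * B 0 0 * B 1 1 + -1 * A 0 1 * A 1 0 + A 0 0 * A 1 1) ^ 2 + (-1 * C 1 1 * D 0 0 + C 1 0 * D 0 1 + C 0 1 * D 1 0 + -1 * C 0 0 * D 1 1 + A 1 1 * B 0 0 + -1 * A 1 0 * B 0 1 + -1 * A 0 1 * B 1 0 + A 0 0 * B 1 1) ^ 2 + (-1 * B 1 1 * C 1 0 + B 1 0 * C 1 1 + -1 * B 0 1 * C 0 0 + B 0 0 * C 0 1 + -1 * A 1 1 * D 1 0 + A 1 0 * D 1 1 + -1 * A 0 1 * D 0 0 + A 0 0 * D 0 1) ^ 2 + (B 1 1 * C 0 0 + -1 * B 1 0 * C 0 1 + -1 * B 0 1 * C 1 0 + B 0 0 * C 1 1 + A 1 1 * D 0 0 + -1 * A 1 0 * D 0 1 + -1 * A 0 1 * D 1 0 + A 0 0 * D 1 1) ^ 2 + (-1 * B 1 1 * D 1 0 + B 1 0 * D 1 1 + B 0 1 * D 0 0 + -1 * B 0 0 *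 D 0 1 + A 1 1 * C 1 0 + -1 * A 1 0 * C 1 1 + -1 * A 0 1 * C 0 0 + A 0 0 * C 0 1) ^ 2 + (B 1 1 * D 0 0 + -1 * B 1 0 * D 0 1 + B 0 1 * D 1 0 + -1 * B 0 0 * D 1 1 + -1 * A 1 1 * C 0 0 + A 1 0 * C 0 1 + -1 * A 0 1 * C 1 0 + A 0 0 * C 1 1) ^ 2) := by
    linear_combination (2 * D 1 1 * D 1 1 + 2 * D 0 1 * D 0 1 + 2 * C 1 1 * C 1 1 + 2 * C 0 1 * C 0 1 + 2 * B 1 1 * B 1 1 + 2 * B 0 1 * B 0 1 + 2 * A 1 1 * A 1 1 + 2 * A 0 1 * A 0 1 + 4 * r) * h00 + (-2 * D 1 0 * D 1 1 + -2 * D 0 0 * D 0 1 + -2 * C 1 0 * C 1 1 + -2 * C 0 0 * C 0 1 + B 1 1 * C 1 0 + B 1 0 * C 1 1 + -2 * B 1 0 * B 1 1 + B 0 1 * C 0 0 + B 0 0 * C 0 1 + -2 * B 0 0 * B 0 1 + -1 * A 1 1 * D 1 0 + -1 * A 1 0 * D 1 1 + -2 * A 1 0 * A 1 1 + -1 * A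 0 1 * D 0 0 + -1 * A 0 0 * D 0 1 + -2 * A 0 0 * A 0 1) * h01 + (-2 * D 1 0 * D 1 1 + -2 * D 0 0 * D 0 1 + -2 * C 1 0 * C 1 1 + -2 * C 0 0 * C 0 1 + B 1 1 * C 1 0 + B 1 0 * C 1 1 + -2 * B 1 0 * B 1 1 + B 0 1 * C 0 0 + B 0 0 * C 0 1 + -2 * B 0 0 * B 0 1 + -1 * A 1 1 * D 1 0 + -1 * A 1 0 * D 1 1 + -2 * A 1 0 * A 1 1 + -1 * A 0 1 * D 0 0 + -1 * A 0 0 * D 0 1 + -2 * A 0 0 * A 0 1) * h10 + (2 * D 1 0 * D 1 0 + 2 * D 0 0 * D 0 0 + 2 * C 1 0 * C 1 0 + 2 * C 0 0 * C 0 0 + -4 * B 1 0 * C 1 0 + 2 * B 1 0 * B 1 0 + -4 * B 0 0 * C 0 0 + 2 * B 0 0 * B 0 0 + 4 * A 1 0 * D 1 0 + 2 * A 1 0 * A 1 0 + 4 * A 0 0 * D 0 0 + 2 * A 0 0 * A 0 0) * h11 + (-2 * C 1 1 * D 1 0 + 2 * C 1 0 * D 1 1 + -2 * C 0 1 * D 0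 0 + 2 * C 0 0 * D 0 1 + B 1 1 * D 1 0 + -1 * B 1 0 * D 1 1 + B 0 1 * D 0 0 + -1 * B 0 0 * D 0 1 + A 1 1 * C 1 0 + -2 * A 1 1 * B 1 0 + -1 * A 1 0 * C 1 1 + 2 * A 1 0 * B 1 1 + A 0 1 * C 0 0 + -2 * A 0 1 * B 0 0 + -1 * A 0 0 * C 0 1 + 2 * A 0 0 * B 0 1) * hG1 + (-2 * C 1 1 * D 1 0 + 2 * C 1 0 * D 1 1 + -2 * C 0 1 * D 0 0 + 2 * C 0 0 * D 0 1 + B 1 1 * D 1 0 + -1 * B 1 0 * D 1 1 + B 0 1 * D 0 0 + -1 * B 0 0 * D 0 1 + A 1 1 * C 1 0 + -2 * A 1 1 * B 1 0 + -1 * A 1 0 * C 1 1 + 2 * A 1 0 * B 1 1 + A 0 1 * C 0 0 + -2 * A 0 1 * B 0 0 + -1 * A 0 0 * C 0 1 + 2 * A 0 0 * B 0 1) * hG2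
  simp only [Fintype.sum_sum_type, Fin.sum_univ_two, Matrix.fromBlocks, Matrix.of_apply,
    Sum.elim_inl, Sum.elim_inr]
  have hXs : (0:ℝ) ≤ (D 0 1 * D 1 0 + -1 * D 0 0 * D 1 1 + -1 * C 0 1 * C 1 0 + C 0 0 * C 1 1 + B 0 1 * B 1 0 + -1 * B 0 0 * B 1 1 + -1 * A 0 1 * A 1 0 + A 0 0 * A 1 1) ^ 2 + (-1 * C 1 1 * D 0 0 + C 1 0 * D 0 1 + C 0 1 * D 1 0 + -1 * C 0 0 * D 1 1 + A 1 1 * B 0 0 + -1 * A 1 0 * B 0 1 + -1 * A 0 1 * B 1 0 + A 0 0 * B 1 1) ^ 2 + (-1 * B 1 1 * C 1 0 + B 1 0 * C 1 1 + -1 * B 0 1 * C 0 0 + B 0 0 * C 0 1 + -1 * A 1 1 * D 1 0 + A 1 0 * D 1 1 + -1 * A 0 1 * D 0 0 + A 0 0 * D 0 1) ^ 2 + (B 1 1 * C 0 0 + -1 * B 1 0 * C 0 1 + -1 * B 0 1 * C 1 0 + B 0 0 * C 1 1 + A 1 1 * D 0 0 + -1 * A 1 0 * D 0 1 + -1 *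 A 0 1 * D 1 0 + A 0 0 * D 1 1) ^ 2 + (-1 * B 1 1 * D 1 0 + B 1 0 * D 1 1 + B 0 1 * D 0 0 + -1 * B 0 0 * D 0 1 + A 1 1 * C 1 0 + -1 * A 1 0 * C 1 1 + -1 * A 0 1 * C 0 0 + A 0 0 * C 0 1) ^ 2 + (B 1 1 * D 0 0 + -1 * B 1 0 * D 0 1 + B 0 1 * D 1 0 + -1 * B 0 0 * D 1 1 + -1 * A 1 1 * C 0 0 + A 1 0 * C 0 1 + -1 * A 0 1 * C 1 0 + A 0 0 * C 1 1) ^ 2 := by positivity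
  linarith [key, hXs]
end

section
/- Let p be an odd prime and let a, b, c be integers with p ∤ (b² − 4ac). Then there exists a constant C > 0 (depending on p, a, b, c) such that for every integer k ≥ 1, |∑_{x ∈ (ℤ/p^kℤ)^×} ∑_{y ∈ (ℤ/p^kℤ)^×} e(−y·(a·x + b + c·x⁻¹)/p^k)| ≤ C · p^{3k/2}, where e(t) = exp(2πit), x⁻¹ denotes the inverse of x in (ℤ/p^kℤ)^×, and the argument of e is computed from any integer representative of the class y·(ax + b + cx⁻¹) in ℤ/p^kℤ. -/
open Finset


lemma auxExp {p : ℕ} (hp : p.Prime) {k : ℕ} [NeZero (p ^ k)] (z : ZMod (p ^ k)) :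
    Complex.exp (2 * Real.pi * Complex.I * (-(z.val : ℝ) / (p : ℝ) ^ k)) =
      ZMod.stdAddChar (-z) := by
  have hz : ((-(z.val : ℤ) : ℤ) : ZMod (p ^ k)) = -z := by
    push_cast
    rw [ZMod.natCast_rightInverse z]
  rw [← hz, ZMod.stdAddChar_coe]
  congr 1
  have hN : ((p : ℂ)) ^ k ≠ 0 := pow_ne_zero _ (Nat.cast_ne_zero.mpr hp.ne_zero)
  push_cast
  field_simp



lemma auxA {N : ℕ} [NeZero N] {t : ZMod N} (ht : t ≠ 0) :
    ∑ y : ZMod N, ZMod.stdAddChar (y * t) = 0 := by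
  have h1 : AddChar.mulShift (ZMod.stdAddChar (N := N)) t ≠ 1 :=
    ZMod.isPrimitive_stdAddChar N ht
  have := AddChar.sum_eq_zero_of_ne_one h1
  simpa [AddChar.mulShift_apply, mul_comm] using this

lemma auxB {p : ℕ} (hp : p.Prime) (m : ℕ) [NeZero (p ^ (m + 1))] [NeZero (p ^ m)]
    (t : ZMod (p ^ (m + 1)))
    (ht : (ZMod.castHom (pow_dvd_pow p (Nat.le_succ m)) (ZMod (p ^ m))) t ≠ 0) :
    ∑ y : (ZMod (p ^ (m + 1)))ˣ, ZMod.stdAddChar (-((y : ZMod (p ^ (m + 1))) * t)) = 0 := by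
  have htne : t ≠ 0 := fun h => ht (by simp [h])
  have ht' : ((t.val : ℕ) : ZMod (p ^ (m + 1))) = t := ZMod.natCast_rightInverse t
  have ht'' : (ZMod.castHom (pow_dvd_pow p (Nat.le_succ m)) (ZMod (p ^ m))) t
      = ((t.val : ℕ) : ZMod (p ^ m)) := by
    conv_lhs => rw [← ht']
    rw [map_natCast]
  have key : ∀ w : ℕ, ZMod.stdAddChar (N := p ^ (m + 1)) (-(((p * w : ℕ) : ZMod (p ^ (m + 1))) * t))
      = ZMod.stdAddChar (N := p ^ m)
          (-((w : ZMod (p ^ m)) *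
            (ZMod.castHom (pow_dvd_pow p (Nat.le_succ m)) (ZMod (p ^ m))) t)) := by
    intro w
    have hL : (-(((p * w : ℕ) : ZMod (p ^ (m + 1))) * t))
        = ((-(p * w * t.val) : ℤ) : ZMod (p ^ (m + 1))) := by
      conv_lhs => rw [← ht']
      push_cast
      ring
    have hR : (-((w : ZMod (p ^ m)) *
          (ZMod.castHom (pow_dvd_pow p (Nat.le_succ m)) (ZMod (p ^ m))) t))
        = ((-(w * t.val) : ℤ) : ZMod (p ^ m)) := by
      rw [ht'']
      push_cast
      ring
    rw [hL, hR, ZMod.stdAddChar_coe, ZMod.stdAddChar_coe]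
    congr 1
    have hp0 : (p : ℂ) ≠ 0 := Nat.cast_ne_zero.mpr hp.ne_zero
    have hpm0 : (p : ℂ) ^ m ≠ 0 := pow_ne_zero _ hp0
    push_cast
    field_simp
    ring
  have hdvd : ∀ x : ZMod (p ^ (m + 1)), ¬ IsUnit x → p ∣ x.val := by
    intro x hx
    by_contra hnd
    refine hx ?_
    have hco : Nat.Coprime x.val p :=
      Nat.coprime_comm.mp ((Nat.Prime.coprime_iff_not_dvd hp).mpr hnd)
    have hco2 : Nat.Coprime x.val (p ^ (m + 1)) := hco.pow_right _
    have := (ZMod.isUnit_iff_coprime x.val (p ^ (m + 1))).mpr hco2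
    rwa [ZMod.natCast_rightInverse x] at this
  have h1 : ∑ y : (ZMod (p ^ (m + 1)))ˣ, ZMod.stdAddChar (-((y : ZMod (p ^ (m + 1))) * t))
      = ∑ x ∈ univ.filter (fun x : ZMod (p ^ (m + 1)) => IsUnit x),
          ZMod.stdAddChar (-(x * t)) := by
    apply Finset.sum_bij (fun (u : (ZMod (p ^ (m + 1)))ˣ) _ => (u : ZMod (p ^ (m + 1))))
    · intro u _; simp [u.isUnit]
    · intro u _ v _ h; exact Units.ext h
    · intro x hx
      rcases (mem_filter.mp hx).2 with ⟨u, rfl⟩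
      exact ⟨u, mem_univ u, rfl⟩
    · intro u _; rfl
  have h2 : ∑ x : ZMod (p ^ (m + 1)), ZMod.stdAddChar (-(x * t)) = 0 := by
    have := auxA (t := -t) (neg_ne_zero.mpr htne)
    simpa [mul_neg] using this
  have h3 : ∑ x ∈ univ.filter (fun x : ZMod (p ^ (m + 1)) => ¬ IsUnit x),
        ZMod.stdAddChar (-(x * t))
      = ∑ z : ZMod (p ^ m), ZMod.stdAddChar
          (-(z * (ZMod.castHom (pow_dvd_pow p (Nat.le_succ m)) (ZMod (p ^ m))) t)) := by
    refine Finset.sum_nbij' (fun x => ((x.val / p : ℕ) : ZMod (p ^ m)))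
      (fun z => ((p * z.val : ℕ) : ZMod (p ^ (m + 1)))) (fun x _ => mem_univ _) ?_ ?_ ?_ ?_
    · intro z _
      simp only [mem_filter, mem_univ, true_and]
      intro hu
      rw [ZMod.isUnit_iff_coprime, Nat.Coprime] at hu
      have hd := Nat.dvd_gcd (dvd_mul_right p z.val) (dvd_pow_self p (Nat.succ_ne_zero m))
      rw [hu] at hd
      exact absurd (Nat.le_of_dvd one_pos hd) (Nat.not_le.mpr hp.one_lt)
    · intro x hx
      have hd := hdvd x (mem_filter.mp hx).2
      have hlt : x.val / p < p ^ m := by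
        rw [Nat.div_lt_iff_lt_mul hp.pos, ← pow_succ]
        exact ZMod.val_lt x
      rw [ZMod.val_natCast_of_lt hlt, Nat.mul_div_cancel' hd]
      exact ZMod.natCast_rightInverse x
    · intro z _
      have hlt : p * z.val < p ^ (m + 1) := by
        rw [pow_succ']
        exact mul_lt_mul_of_pos_left (ZMod.val_lt z) hp.pos
      rw [ZMod.val_natCast_of_lt hlt, Nat.mul_div_cancel_left _ hp.pos]
      exact ZMod.natCast_rightInverse z
    · intro x hx
      have hd := hdvd x (mem_filter.mp hx).2
      conv_lhs => rw [← ZMod.natCast_rightInverse x, ← Nat.mul_div_cancel' hd]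
      exact key (x.val / p)
  have hsplit := Finset.sum_filter_add_sum_filter_not univ
      (fun x : ZMod (p ^ (m + 1)) => IsUnit x) (fun x => ZMod.stdAddChar (-(x * t)))
  have h4 : ∑ z : ZMod (p ^ m), ZMod.stdAddChar
      (-(z * (ZMod.castHom (pow_dvd_pow p (Nat.le_succ m)) (ZMod (p ^ m))) t)) = 0 := by
    have := auxA (t := -((ZMod.castHom (pow_dvd_pow p (Nat.le_succ m)) (ZMod (p ^ m))) t))
      (neg_ne_zero.mpr ht)
    simpa [mul_neg] using this
  rw [h1]
  rw [h3, h4, h2] at hsplit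
  simpa using hsplit


lemma auxRoots {p : ℕ} (hp : p.Prime) (hodd : Odd p) (a b c : ℤ)
    (hD : ¬ (p : ℤ) ∣ (b ^ 2 - 4 * a * c)) (m : ℕ) [NeZero (p ^ m)] :
    (univ.filter (fun r : ZMod (p ^ m) =>
      (a : ZMod (p ^ m)) * r ^ 2 + (b : ZMod (p ^ m)) * r + (c : ZMod (p ^ m)) = 0)).card ≤ 2 := by
  haveI : Fact p.Prime := ⟨hp⟩
  cases m with
  | zero =>
      calc _ ≤ (univ : Finset (ZMod (p ^ 0))).card := Finset.card_filter_le _ _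
        _ = 1 := by rw [Finset.card_univ, ZMod.card, pow_zero]
        _ ≤ 2 := one_le_two
  | succ m =>
  haveI : Fact (1 < p ^ (m + 1)) := ⟨Nat.one_lt_pow (Nat.succ_ne_zero m) hp.one_lt⟩
  set R := ZMod (p ^ (m + 1))
  let π : R →+* ZMod p := ZMod.castHom (dvd_pow_self p (Nat.succ_ne_zero m)) (ZMod p)
  have unit_iff : ∀ x : R, IsUnit x ↔ π x ≠ 0 := by
    intro x
    constructor
    · intro h
      exact (h.map π).ne_zero
    · intro hne
      have hx : ((x.val : ℕ) : R) = x := ZMod.natCast_rightInverse x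
      have hπ : π x = ((x.val : ℕ) : ZMod p) := by
        conv_lhs => rw [← hx]
        rw [map_natCast]
      rw [hπ, Ne, ZMod.natCast_eq_zero_iff] at hne
      have hco : Nat.Coprime x.val p :=
        Nat.coprime_comm.mp ((Nat.Prime.coprime_iff_not_dvd hp).mpr hne)
      have := (ZMod.isUnit_iff_coprime x.val (p ^ (m + 1))).mpr (hco.pow_right _)
      rwa [hx] at this
  have hDunit : IsUnit (((b ^ 2 - 4 * a * c : ℤ) : R)) := by
    rw [unit_iff, map_intCast, Ne, ZMod.intCast_zmod_eq_zero_iff_dvd]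
    exact hD
  have h2unit : IsUnit (2 : R) := by
    rw [unit_iff, map_ofNat]
    have : ((2 : ℕ) : ZMod p) ≠ 0 := by
      rw [Ne, ZMod.natCast_eq_zero_iff]
      intro h
      have hp2 : p = 2 := le_antisymm (Nat.le_of_dvd two_pos h) hp.two_le
      rw [hp2] at hodd
      exact (Nat.not_odd_iff_even.mpr even_two) hodd
    simpa using this
  set g : R → R := fun r => 2 * (a : R) * r + (b : R) with hg
  have hg_sq : ∀ r : R, (a : R) * r ^ 2 + (b : R) * r + (c : R) = 0 →
      g r * g r = ((b ^ 2 - 4 * a * c : ℤ) : R) := by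
    intro r hr
    have expand : g r * g r = ((b ^ 2 - 4 * a * c : ℤ) : R)
        + 4 * (a : R) * ((a : R) * r ^ 2 + (b : R) * r + (c : R)) := by
      simp only [hg]
      push_cast
      rw [Int.cast_mul, Int.cast_mul]
      push_cast
      ring
    rw [expand, hr]
    ring
  have hg_unit : ∀ r : R, (a : R) * r ^ 2 + (b : R) * r + (c : R) = 0 → IsUnit (g r) := by
    intro r hr
    exact isUnit_of_mul_isUnit_left (by rw [hg_sq r hr]; exact hDunit)
  have pair : ∀ r s : R, (a : R) * r ^ 2 + (b : R) * r + (c : R) = 0 →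
      (a : R) * s ^ 2 + (b : R) * s + (c : R) = 0 → r ≠ s → g s = -g r := by
    intro r s hr hs hrs
    have h1 : (r - s) * (g r + g s) = 0 := by
      have : (r - s) * (g r + g s) =
          2 * (((a : R) * r ^ 2 + (b : R) * r + (c : R))
            - ((a : R) * s ^ 2 + (b : R) * s + (c : R))) := by
        simp only [hg]; ring
      rw [this, hr, hs]
      ring
    have hsum : ¬ IsUnit (g r + g s) := by
      intro hu
      exact hrs (sub_eq_zero.mp ((hu.mul_left_eq_zero).mp h1))
    have hdiff : IsUnit (g r - g s) := by
      rw [unit_iff]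
      intro hz
      rw [unit_iff, not_not] at hsum
      have h2gr : π (2 * g r) = 0 := by
        have : (2 : R) * g r = (g r - g s) + (g r + g s) := by ring
        rw [this, map_add, hz, hsum, add_zero]
      exact (unit_iff _).mp (h2unit.mul (hg_unit r hr)) h2gr
    have h2 : (g r - g s) * (g r + g s) = 0 := by
      linear_combination hg_sq r hr - hg_sq s hs
    have h3 : g r + g s = 0 := (hdiff.mul_right_eq_zero).mp h2
    linear_combination h3
  by_contra hcard
  push_neg at hcard
  obtain ⟨r, hr, s, hs, u, hu, hrs, hru, hsu⟩ := Finset.two_lt_card.mp hcard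
  have hr' := (mem_filter.mp hr).2
  have hs' := (mem_filter.mp hs).2
  have hu' := (mem_filter.mp hu).2
  have e1 := pair r s hr' hs' hrs
  have e2 := pair r u hr' hu' hru
  have e3 := pair s u hs' hu' hsu
  rw [e1, neg_neg] at e3
  rw [e3] at e2
  have h0 : (2 : R) * g r = 0 := by linear_combination e2
  exact (h2unit.mul (hg_unit r hr')).ne_zero h0


lemma auxCount {p : ℕ} (hp : p.Prime) (m : ℕ) [NeZero (p ^ (m + 1))] [NeZero (p ^ m)]
    (Q : ZMod (p ^ m) → Prop) [DecidablePred Q]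
    (hQ : (univ.filter Q).card ≤ 2) :
    (univ.filter (fun x : ZMod (p ^ (m + 1)) =>
      Q ((ZMod.castHom (pow_dvd_pow p (Nat.le_succ m)) (ZMod (p ^ m))) x))).card ≤ 2 * p := by
  set f : ZMod (p ^ (m + 1)) → ZMod (p ^ m) :=
    fun x => (ZMod.castHom (pow_dvd_pow p (Nat.le_succ m)) (ZMod (p ^ m))) x with hf
  have hfiber : ∀ b : ZMod (p ^ m),
      (univ.filter (fun x : ZMod (p ^ (m + 1)) => f x = b)).card ≤ p := by
    intro b
    have hmaps : ∀ x ∈ univ.filter (fun x : ZMod (p ^ (m + 1)) => f x = b),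
        x.val / p ^ m ∈ Finset.range p := by
      intro x _
      rw [Finset.mem_range, Nat.div_lt_iff_lt_mul (pow_pos hp.pos m), ← pow_succ']
      exact ZMod.val_lt x
    have hinj : Set.InjOn (fun x : ZMod (p ^ (m + 1)) => x.val / p ^ m)
        (univ.filter (fun x : ZMod (p ^ (m + 1)) => f x = b)) := by
      intro x hx y hy hxy
      simp only [coe_filter, Set.mem_setOf_eq] at hx hy
      have hx' : f x = ((x.val : ℕ) : ZMod (p ^ m)) := by
        simp only [hf]
        conv_lhs => rw [← ZMod.natCast_rightInverse x]
        rw [map_natCast]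
      have hy' : f y = ((y.val : ℕ) : ZMod (p ^ m)) := by
        simp only [hf]
        conv_lhs => rw [← ZMod.natCast_rightInverse y]
        rw [map_natCast]
      have hmod : x.val % p ^ m = y.val % p ^ m := by
        have : ((x.val : ℕ) : ZMod (p ^ m)) = ((y.val : ℕ) : ZMod (p ^ m)) := by
          rw [← hx', ← hy', hx.2, hy.2]
        rwa [ZMod.natCast_eq_natCast_iff, Nat.ModEq] at this
      have hdiv : x.val / p ^ m = y.val / p ^ m := hxy
      have hval : x.val = y.val := by
        conv_lhs => rw [← Nat.div_add_mod x.val (p ^ m)]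
        conv_rhs => rw [← Nat.div_add_mod y.val (p ^ m)]
        rw [hmod, hdiv]
      have := congrArg (fun n : ℕ => ((n : ℕ) : ZMod (p ^ (m + 1)))) hval
      simpa [ZMod.natCast_rightInverse x, ZMod.natCast_rightInverse y] using this
    calc (univ.filter (fun x : ZMod (p ^ (m + 1)) => f x = b)).card
        ≤ (Finset.range p).card := Finset.card_le_card_of_injOn _ hmaps hinj
      _ = p := Finset.card_range p
  have hmapsto : ∀ x ∈ univ.filter (fun x : ZMod (p ^ (m + 1)) => Q (f x)),
      f x ∈ univ.filter Q := by
    intro x hx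
    simp only [mem_filter, mem_univ, true_and] at hx ⊢
    exact hx
  calc (univ.filter (fun x : ZMod (p ^ (m + 1)) => Q (f x))).card
      ≤ p * (univ.filter Q).card := by
        refine Finset.card_le_mul_card_image_of_maps_to hmapsto p ?_
        intro b _
        calc ((univ.filter (fun x : ZMod (p ^ (m + 1)) => Q (f x))).filter
              (fun x => f x = b)).card
            ≤ (univ.filter (fun x : ZMod (p ^ (m + 1)) => f x = b)).card := by
              apply Finset.card_le_card
              intro x hx
              simp only [mem_filter, mem_univ, true_and] at hx ⊢
              exact hx.2
          _ ≤ p := hfiber b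
    _ ≤ p * 2 := Nat.mul_le_mul_left p hQ
    _ = 2 * p := Nat.mul_comm p 2
/-- Bound for the exponential sum
`∑_{x,y ∈ (ℤ/p^k)^×} e(−y(ax + b + cx⁻¹)/p^k) ≪_p p^{3k/2}` when `p ∤ b² − 4ac`. -/
theorem stmt_14 (p : ℕ) (hp : p.Prime) (hodd : Odd p) (a b c : ℤ)
    (hD : ¬ (p : ℤ) ∣ (b ^ 2 - 4 * a * c)) :
    ∃ C : ℝ, 0 < C ∧ ∀ k : ℕ, 1 ≤ k →
      haveI : NeZero (p ^ k) := ⟨pow_ne_zero k hp.ne_zero⟩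
      ‖(∑ x : (ZMod (p ^ k))ˣ, ∑ y : (ZMod (p ^ k))ˣ,
            Complex.exp (2 * Real.pi * Complex.I *
              (-(((y : ZMod (p ^ k)) *
                    ((a : ZMod (p ^ k)) * (x : ZMod (p ^ k)) + (b : ZMod (p ^ k)) +
                      (c : ZMod (p ^ k)) * ((x⁻¹ : (ZMod (p ^ k))ˣ) : ZMod (p ^ k)))).val
                  : ℝ) / (p : ℝ) ^ k)))‖ ≤
        C * (p : ℝ) ^ ((3 * (k : ℝ)) / 2) := by
  have hp1 : (1 : ℝ) ≤ (p : ℝ) := by exact_mod_cast hp.one_le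
  have hp0 : (0 : ℝ) < (p : ℝ) := by exact_mod_cast hp.pos
  refine ⟨2 * (p : ℝ) ^ 2, by positivity, ?_⟩
  intro k hk
  obtain ⟨m, rfl⟩ : ∃ m, k = m + 1 := ⟨k - 1, (Nat.succ_pred_eq_of_pos hk).symm⟩
  haveI : NeZero (p ^ (m + 1)) := ⟨pow_ne_zero _ hp.ne_zero⟩
  haveI : NeZero (p ^ m) := ⟨pow_ne_zero _ hp.ne_zero⟩
  set cst : ZMod (p ^ (m + 1)) →+* ZMod (p ^ m) :=
    ZMod.castHom (pow_dvd_pow p (Nat.le_succ m)) (ZMod (p ^ m)) with hcst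
  set t : (ZMod (p ^ (m + 1)))ˣ → ZMod (p ^ (m + 1)) := fun x =>
    (a : ZMod (p ^ (m + 1))) * (x : ZMod (p ^ (m + 1))) + (b : ZMod (p ^ (m + 1))) +
      (c : ZMod (p ^ (m + 1))) * ((x⁻¹ : (ZMod (p ^ (m + 1)))ˣ) : ZMod (p ^ (m + 1))) with htdef
  -- rewrite summands as values of the standard additive character
  have hrw : ∀ x y : (ZMod (p ^ (m + 1)))ˣ,
      Complex.exp (2 * Real.pi * Complex.I *
        (-((((y : ZMod (p ^ (m + 1))) * t x).val : ℝ)) / (p : ℝ) ^ (m + 1)))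
      = ZMod.stdAddChar (-((y : ZMod (p ^ (m + 1))) * t x)) := fun x y =>
    auxExp hp ((y : ZMod (p ^ (m + 1))) * t x)
  rw [show (∑ x : (ZMod (p ^ (m + 1)))ˣ, ∑ y : (ZMod (p ^ (m + 1)))ˣ,
      Complex.exp (2 * Real.pi * Complex.I *
        (-(((y : ZMod (p ^ (m + 1))) *
              ((a : ZMod (p ^ (m + 1))) * (x : ZMod (p ^ (m + 1))) + (b : ZMod (p ^ (m + 1))) +
                (c : ZMod (p ^ (m + 1))) *
                  ((x⁻¹ : (ZMod (p ^ (m + 1)))ˣ) : ZMod (p ^ (m + 1))))).val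
            : ℝ) / (p : ℝ) ^ (m + 1))))
      = ∑ x : (ZMod (p ^ (m + 1)))ˣ, ∑ y : (ZMod (p ^ (m + 1)))ˣ,
          ZMod.stdAddChar (-((y : ZMod (p ^ (m + 1))) * t x)) from
    Finset.sum_congr rfl fun x _ => Finset.sum_congr rfl fun y _ => hrw x y]
  -- the quadratic-root predicate mod p^m
  set Q : ZMod (p ^ m) → Prop := fun r =>
    (a : ZMod (p ^ m)) * r ^ 2 + (b : ZMod (p ^ m)) * r + (c : ZMod (p ^ m)) = 0 with hQdef
  have hbadiff : ∀ x : (ZMod (p ^ (m + 1)))ˣ, cst (t x) = 0 ↔ Q (cst (x : ZMod (p ^ (m + 1)))) := by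
    intro x
    have hxt : (x : ZMod (p ^ (m + 1))) * t x =
        (a : ZMod (p ^ (m + 1))) * (x : ZMod (p ^ (m + 1))) ^ 2 +
          (b : ZMod (p ^ (m + 1))) * (x : ZMod (p ^ (m + 1))) + (c : ZMod (p ^ (m + 1))) := by
      have hinv : (x : ZMod (p ^ (m + 1))) * ((x⁻¹ : (ZMod (p ^ (m + 1)))ˣ) :
          ZMod (p ^ (m + 1))) = 1 := x.mul_inv
      simp only [htdef]
      calc (x : ZMod (p ^ (m + 1))) *
            ((a : ZMod (p ^ (m + 1))) * (x : ZMod (p ^ (m + 1))) + (b : ZMod (p ^ (m + 1))) +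
              (c : ZMod (p ^ (m + 1))) * ((x⁻¹ : (ZMod (p ^ (m + 1)))ˣ) : ZMod (p ^ (m + 1))))
          = (a : ZMod (p ^ (m + 1))) * (x : ZMod (p ^ (m + 1))) ^ 2 +
              (b : ZMod (p ^ (m + 1))) * (x : ZMod (p ^ (m + 1))) +
              (c : ZMod (p ^ (m + 1))) * ((x : ZMod (p ^ (m + 1))) *
                ((x⁻¹ : (ZMod (p ^ (m + 1)))ˣ) : ZMod (p ^ (m + 1)))) := by ring
        _ = _ := by rw [hinv, mul_one]
    have hmap : cst ((x : ZMod (p ^ (m + 1))) * t x)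
        = cst (x : ZMod (p ^ (m + 1))) * cst (t x) := map_mul _ _ _
    have hmap2 : cst ((x : ZMod (p ^ (m + 1))) * t x)
        = (a : ZMod (p ^ m)) * (cst (x : ZMod (p ^ (m + 1)))) ^ 2 +
          (b : ZMod (p ^ m)) * cst (x : ZMod (p ^ (m + 1))) + (c : ZMod (p ^ m)) := by
      rw [hxt]
      push_cast [map_add, map_mul, map_pow, map_intCast]
      rfl
    have hxu : IsUnit (cst (x : ZMod (p ^ (m + 1)))) := x.isUnit.map cst
    constructor
    · intro h
      have : cst ((x : ZMod (p ^ (m + 1))) * t x) = 0 := by rw [hmap, h, mul_zero]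
      rw [hmap2] at this
      exact this
    · intro h
      have : cst (x : ZMod (p ^ (m + 1))) * cst (t x) = 0 := by
        rw [← hmap, hmap2]; exact h
      exact (hxu.mul_right_eq_zero).mp this
  -- pointwise bound on the inner sums
  have hpoint : ∀ x : (ZMod (p ^ (m + 1)))ˣ,
      ‖(∑ y : (ZMod (p ^ (m + 1)))ˣ, ZMod.stdAddChar (-((y : ZMod (p ^ (m + 1))) * t x)))‖
        ≤ if cst (t x) = 0 then ((p : ℝ) ^ (m + 1)) else 0 := by
    intro x
    by_cases hx : cst (t x) = 0
    · rw [if_pos hx]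
      calc ‖(∑ y : (ZMod (p ^ (m + 1)))ˣ,
            ZMod.stdAddChar (-((y : ZMod (p ^ (m + 1))) * t x)))‖
          ≤ ∑ y : (ZMod (p ^ (m + 1)))ˣ,
              ‖(ZMod.stdAddChar (-((y : ZMod (p ^ (m + 1))) * t x)))‖ :=
            norm_sum_le _ _
        _ = ∑ _y : (ZMod (p ^ (m + 1)))ˣ, (1 : ℝ) := by
            refine Finset.sum_congr rfl fun y _ => ?_
            rw [ZMod.stdAddChar_apply, Circle.norm_coe]
        _ = (Fintype.card (ZMod (p ^ (m + 1)))ˣ : ℝ) := by simp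
        _ ≤ ((p ^ (m + 1) : ℕ) : ℝ) := by
            have h1 : Fintype.card (ZMod (p ^ (m + 1)))ˣ ≤ Fintype.card (ZMod (p ^ (m + 1))) :=
              Fintype.card_le_of_injective (fun u => (u : ZMod (p ^ (m + 1)))) (fun _ _ h => Units.ext h)
            have h2 : Fintype.card (ZMod (p ^ (m + 1))) = p ^ (m + 1) := ZMod.card _
            exact_mod_cast h2 ▸ h1
        _ = (p : ℝ) ^ (m + 1) := by push_cast; ring
    · rw [if_neg hx, auxB hp m (t x) hx]
      simp
  -- sum the pointwise bounds
  have hcount : ((univ.filter (fun x : (ZMod (p ^ (m + 1)))ˣ => cst (t x) = 0)).card : ℝ)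
      ≤ 2 * (p : ℝ) := by
    have step1 : (univ.filter (fun x : (ZMod (p ^ (m + 1)))ˣ => cst (t x) = 0)).card
        ≤ (univ.filter (fun z : ZMod (p ^ (m + 1)) => Q (cst z))).card := by
      refine Finset.card_le_card_of_injOn (fun u => (u : ZMod (p ^ (m + 1)))) ?_ ?_
      · intro u hu
        simp only [Finset.mem_coe, mem_filter, mem_univ, true_and] at hu ⊢
        exact (hbadiff u).mp hu
      · intro u _ v _ h
        exact Units.ext h
    have step2 : (univ.filter (fun z : ZMod (p ^ (m + 1)) => Q (cst z))).card ≤ 2 * p :=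
      auxCount hp m Q (auxRoots hp hodd a b c hD m)
    calc ((univ.filter (fun x : (ZMod (p ^ (m + 1)))ˣ => cst (t x) = 0)).card : ℝ)
        ≤ ((univ.filter (fun z : ZMod (p ^ (m + 1)) => Q (cst z))).card : ℝ) := by
          exact_mod_cast step1
      _ ≤ ((2 * p : ℕ) : ℝ) := by exact_mod_cast step2
      _ = 2 * (p : ℝ) := by push_cast; ring
  calc ‖(∑ x : (ZMod (p ^ (m + 1)))ˣ, ∑ y : (ZMod (p ^ (m + 1)))ˣ,
        ZMod.stdAddChar (-((y : ZMod (p ^ (m + 1))) * t x)))‖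
      ≤ ∑ x : (ZMod (p ^ (m + 1)))ˣ, ‖(∑ y : (ZMod (p ^ (m + 1)))ˣ,
          ZMod.stdAddChar (-((y : ZMod (p ^ (m + 1))) * t x)))‖ := norm_sum_le _ _
    _ ≤ ∑ x : (ZMod (p ^ (m + 1)))ˣ, (if cst (t x) = 0 then ((p : ℝ) ^ (m + 1)) else 0) :=
        Finset.sum_le_sum fun x _ => hpoint x
    _ = ((univ.filter (fun x : (ZMod (p ^ (m + 1)))ˣ => cst (t x) = 0)).card : ℝ)
          * (p : ℝ) ^ (m + 1) := by
        rw [Finset.sum_ite, Finset.sum_const, Finset.sum_const_zero, add_zero, nsmul_eq_mul]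
    _ ≤ (2 * (p : ℝ)) * (p : ℝ) ^ (m + 1) := by
        apply mul_le_mul_of_nonneg_right hcount
        positivity
    _ ≤ 2 * (p : ℝ) ^ 2 * (p : ℝ) ^ ((3 * ((m + 1 : ℕ) : ℝ)) / 2) := by
        have key : (p : ℝ) ^ (m + 1) ≤ (p : ℝ) ^ ((3 * ((m + 1 : ℕ) : ℝ)) / 2) * (p : ℝ) := by
          have k1 : (p : ℝ) ^ (m + 1) = (p : ℝ) ^ (((m + 1 : ℕ)) : ℝ) :=
            (Real.rpow_natCast _ _).symm
          have k2 : (p : ℝ) ^ (((m + 1 : ℕ)) : ℝ) ≤ (p : ℝ) ^ ((3 * ((m + 1 : ℕ) : ℝ)) / 2) :=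
            Real.rpow_le_rpow_of_exponent_le hp1 (by push_cast; linarith)
          rw [k1]
          calc (p : ℝ) ^ (((m + 1 : ℕ)) : ℝ) ≤ (p : ℝ) ^ ((3 * ((m + 1 : ℕ) : ℝ)) / 2) := k2
            _ ≤ (p : ℝ) ^ ((3 * ((m + 1 : ℕ) : ℝ)) / 2) * (p : ℝ) := by
                apply le_mul_of_one_le_right (by positivity) hp1
        calc (2 * (p : ℝ)) * (p : ℝ) ^ (m + 1)
            ≤ (2 * (p : ℝ)) * ((p : ℝ) ^ ((3 * ((m + 1 : ℕ) : ℝ)) / 2) * (p : ℝ)) := by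
              apply mul_le_mul_of_nonneg_left key
              positivity
          _ = 2 * (p : ℝ) ^ 2 * (p : ℝ) ^ ((3 * ((m + 1 : ℕ) : ℝ)) / 2) := by ring
end

section
/- Let p be an odd prime and let a, b, c be integers with p ∤ (b² − 4ac). Then there exists a constant C > 0 (depending on p, a, b, c) such that for every integer k ≥ 2, |∑_{h=1}^{p−1} ∑_{(x,z)} ∑_{y ∈ (ℤ/p^kℤ)^×} e(−y·(a·x + c·z + b)/p^k)| ≤ C · p^{3k/2}, where the middle sum runs over pairs (x, z) ∈ (ℤ/p^kℤ)² with x·z ≡ 1 + h·p^{k−1} (mod p^k), e(t) = exp(2πit), and the argument of e is computed from any integer representative of the class y·(ax + cz + b) in ℤ/p^kℤ. -/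
open Finset


lemma aux_isUnit_iff {p j : ℕ} (hp : p.Prime) (hj : j ≠ 0) [NeZero (p ^ j)]
    (x : ZMod (p ^ j)) : IsUnit x ↔ ((x.val : ZMod p) ≠ 0) := by
  haveI : NeZero p := ⟨hp.pos.ne'⟩
  rw [Ne, ZMod.natCast_eq_zero_iff]
  constructor
  · intro hu hdvd
    rw [← ZMod.natCast_zmod_val x, ZMod.isUnit_iff_coprime] at hu
    have h1 : p ∣ Nat.gcd x.val (p ^ j) := Nat.dvd_gcd hdvd (dvd_pow_self p hj)
    rw [hu] at h1
    exact hp.one_lt.ne' (Nat.dvd_one.mp h1)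
  · intro h
    rw [← ZMod.natCast_zmod_val x, ZMod.isUnit_iff_coprime]
    exact Nat.Coprime.pow_right _ ((hp.coprime_iff_not_dvd).2 h).symm

lemma aux_roots {p : ℕ} (hp : p.Prime) (hodd : Odd p) (a b c : ℤ)
    (hD : ¬ (p : ℤ) ∣ (b ^ 2 - 4 * a * c)) (j : ℕ) (hj : j ≠ 0) [NeZero (p ^ j)] :
    (Finset.univ.filter fun x : ZMod (p ^ j) =>
      (a : ZMod (p ^ j)) * x ^ 2 + (b : ZMod (p ^ j)) * x + (c : ZMod (p ^ j)) = 0).card ≤ 2 := by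
  haveI : Fact p.Prime := ⟨hp⟩
  haveI : NeZero p := ⟨hp.pos.ne'⟩
  let φ : ZMod (p ^ j) →+* ZMod p := ZMod.castHom (dvd_pow_self p hj) (ZMod p)
  have hval : ∀ u : ZMod (p ^ j), ((u.val : ZMod p)) = φ u := fun u =>
    (ZMod.natCast_val u).trans (ZMod.castHom_apply u).symm
  have hφ : ∀ u : ZMod (p ^ j), φ u ≠ 0 → IsUnit u := fun u hu =>
    (aux_isUnit_iff hp hj u).2 (by rw [hval]; exact hu)
  have h2 : (2 : ZMod p) ≠ 0 := by
    have hp2 : ¬ p ∣ 2 := by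
      intro h
      rw [Nat.prime_dvd_prime_iff_eq hp Nat.prime_two] at h
      rw [h] at hodd
      simp [Nat.odd_iff] at hodd
    simpa [ZMod.natCast_eq_zero_iff] using
      (show ((2 : ℕ) : ZMod p) ≠ 0 by rwa [Ne, ZMod.natCast_eq_zero_iff])
  by_cases hpa : (p : ℤ) ∣ a
  · -- linear case: at most one root
    have hpb : ¬ (p : ℤ) ∣ b := by
      intro h
      exact hD (dvd_sub (by rw [sq]; exact h.mul_left b) ((hpa.mul_left 4).mul_right c))
    refine le_trans (Finset.card_le_one.2 ?_) one_le_two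
    intro x hx x' hx'
    simp only [Finset.mem_filter] at hx hx'
    have key : (x - x') * ((a : ZMod (p ^ j)) * (x + x') + (b : ZMod (p ^ j))) = 0 := by
      have h := sub_eq_zero_of_eq (hx.2.trans hx'.2.symm)
      calc (x - x') * ((a : ZMod (p ^ j)) * (x + x') + (b : ZMod (p ^ j)))
          = ((a : ZMod (p ^ j)) * x ^ 2 + (b : ZMod (p ^ j)) * x + c)
            - ((a : ZMod (p ^ j)) * x' ^ 2 + (b : ZMod (p ^ j)) * x' + c) := by ring
        _ = 0 := h
    have hu : IsUnit ((a : ZMod (p ^ j)) * (x + x') + (b : ZMod (p ^ j))) := by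
      apply hφ
      have : φ ((a : ZMod (p ^ j)) * (x + x') + (b : ZMod (p ^ j)))
          = (a : ZMod p) * (φ x + φ x') + (b : ZMod p) := by
        simp [map_add, map_mul, map_intCast]
      rw [this, (ZMod.intCast_zmod_eq_zero_iff_dvd a p).2 hpa, zero_mul, zero_add]
      exact fun h => hpb ((ZMod.intCast_zmod_eq_zero_iff_dvd b p).1 h)
    have := (hu.mul_left_eq_zero).1 key
    exact sub_eq_zero.1 this
  · -- quadratic case
    set D : ZMod (p ^ j) := ((b ^ 2 - 4 * a * c : ℤ) : ZMod (p ^ j)) with hDdef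
    set T : Finset (ZMod (p ^ j)) := Finset.univ.filter (fun t => t ^ 2 = D) with hT
    have hmap : ∀ x ∈ (Finset.univ.filter fun x : ZMod (p ^ j) =>
        (a : ZMod (p ^ j)) * x ^ 2 + (b : ZMod (p ^ j)) * x + (c : ZMod (p ^ j)) = 0),
        (2 * (a : ZMod (p ^ j)) * x + (b : ZMod (p ^ j))) ∈ T := by
      intro x hx
      simp only [Finset.mem_filter, Finset.mem_univ, true_and] at hx
      rw [hT, Finset.mem_filter]
      refine ⟨Finset.mem_univ _, ?_⟩
      have : (2 * (a : ZMod (p ^ j)) * x + (b : ZMod (p ^ j))) ^ 2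
          = D + 4 * (a : ZMod (p ^ j)) *
            ((a : ZMod (p ^ j)) * x ^ 2 + (b : ZMod (p ^ j)) * x + (c : ZMod (p ^ j))) := by
        rw [hDdef]; push_cast; ring
      rw [this, hx, mul_zero, add_zero]
    have h2a : IsUnit (2 * (a : ZMod (p ^ j))) := by
      apply hφ
      have : φ (2 * (a : ZMod (p ^ j))) = 2 * (a : ZMod p) := by
        simp [map_mul, map_intCast, map_ofNat]
      rw [this]
      exact mul_ne_zero h2 (fun h => hpa ((ZMod.intCast_zmod_eq_zero_iff_dvd a p).1 h))
    have hinj : Set.InjOn (fun x : ZMod (p ^ j) => 2 * (a : ZMod (p ^ j)) * x +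
        (b : ZMod (p ^ j)))
        (Finset.univ.filter fun x : ZMod (p ^ j) =>
          (a : ZMod (p ^ j)) * x ^ 2 + (b : ZMod (p ^ j)) * x + (c : ZMod (p ^ j)) = 0) := by
      intro x _ x' _ h
      simp only at h
      have : 2 * (a : ZMod (p ^ j)) * (x - x') = 0 := by
        rw [mul_sub]; rw [sub_eq_zero]; exact by linear_combination h
      exact sub_eq_zero.1 ((h2a.mul_right_eq_zero).1 this)
    have hcard : (Finset.univ.filter fun x : ZMod (p ^ j) =>
        (a : ZMod (p ^ j)) * x ^ 2 + (b : ZMod (p ^ j)) * x + (c : ZMod (p ^ j)) = 0).card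
        ≤ T.card := Finset.card_le_card_of_injOn _ hmap hinj
    refine hcard.trans ?_
    rcases T.eq_empty_or_nonempty with hTe | ⟨t₀, ht₀⟩
    · simp [hTe]
    · have ht₀' := ht₀
      simp only [hT, Finset.mem_filter, Finset.mem_univ, true_and] at ht₀'
      have ht₀p : φ t₀ ≠ 0 := by
        intro h
        apply hD
        have : φ D = 0 := by rw [← ht₀', map_pow, h, zero_pow two_ne_zero]
        rw [hDdef] at this
        rw [map_intCast] at this
        exact (ZMod.intCast_zmod_eq_zero_iff_dvd _ p).1 this
      have hsub : T ⊆ {t₀, -t₀} := by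
        intro t ht
        simp only [hT, Finset.mem_filter, Finset.mem_univ, true_and] at ht
        have hprod : (t - t₀) * (t + t₀) = 0 := by
          calc (t - t₀) * (t + t₀) = t ^ 2 - t₀ ^ 2 := by ring
            _ = 0 := by rw [ht, ht₀', sub_self]
        simp only [Finset.mem_insert, Finset.mem_singleton]
        by_cases hc1 : φ (t - t₀) = 0
        · left
          have hup : φ (t + t₀) ≠ 0 := by
            have : φ (t + t₀) = φ (t - t₀) + 2 * φ t₀ := by
              rw [map_sub, map_add]; ring
            rw [this, hc1, zero_add]
            exact mul_ne_zero h2 ht₀p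
          have hu := hφ _ hup
          exact sub_eq_zero.1 ((hu.mul_left_eq_zero).1 hprod)
        · right
          have hu := hφ _ hc1
          have := (hu.mul_right_eq_zero).1 hprod
          linear_combination this
      calc T.card ≤ ({t₀, -t₀} : Finset (ZMod (p ^ j))).card := Finset.card_le_card hsub
        _ ≤ 2 := Finset.card_insert_le _ _ |>.trans (by simp)

lemma aux_unit_sum {p : ℕ} (hp : p.Prime) {k : ℕ} (hk : 2 ≤ k) [NeZero (p ^ k)]
    [NeZero (p ^ (k - 1))] (M : ZMod (p ^ k))
    (hM : ((M.val : ZMod (p ^ (k - 1)))) ≠ 0) :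
    ∑ y : (ZMod (p ^ k))ˣ, ZMod.stdAddChar ((y : ZMod (p ^ k)) * M) = 0 := by
  haveI : NeZero p := ⟨hp.pos.ne'⟩
  have hk0 : k ≠ 0 := by omega
  have hk1 : k - 1 ≠ 0 := by omega
  have hkk : k - 1 + 1 = k := by omega
  have hM0 : M ≠ 0 := by rintro rfl; simp at hM
  -- full sum vanishes
  have htot : ∑ y : ZMod (p ^ k), ZMod.stdAddChar (y * M) = 0 := by
    rw [AddChar.sum_mulShift M (ZMod.isPrimitive_stdAddChar _), if_neg hM0]
    simp
  -- unit part equals units sum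
  have hunit : ∑ y : (ZMod (p ^ k))ˣ, ZMod.stdAddChar ((y : ZMod (p ^ k)) * M)
      = ∑ y ∈ Finset.univ.filter (fun y : ZMod (p ^ k) => IsUnit y),
          ZMod.stdAddChar (y * M) := by
    refine Finset.sum_nbij (fun u : (ZMod (p ^ k))ˣ => (u : ZMod (p ^ k))) ?_ ?_ ?_ ?_
    · intro u _; simp [u.isUnit]
    · intro u _ v _ h; exact Units.ext h
    · intro y hy
      simp only [Finset.coe_filter, Set.mem_setOf_eq, Finset.mem_univ, true_and] at hy
      exact ⟨hy.unit, by simp, hy.unit_spec⟩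
    · intro u _; rfl
  -- nonunit part equals sum over ZMod (p^(k-1))
  have hkey : ∀ t : ZMod (p ^ (k - 1)),
      ZMod.stdAddChar (t * ((M.val : ZMod (p ^ (k - 1)))))
      = ZMod.stdAddChar (((p * t.val : ℕ) : ZMod (p ^ k)) * M) := by
    intro t
    have h1 : t * ((M.val : ZMod (p ^ (k - 1))))
        = (((t.val * M.val : ℕ) : ℤ) : ZMod (p ^ (k - 1))) := by
      push_cast [ZMod.natCast_zmod_val]
      rfl
    have h2 : ((p * t.val : ℕ) : ZMod (p ^ k)) * M
        = (((p * t.val * M.val : ℕ) : ℤ) : ZMod (p ^ k)) := by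
      push_cast
      rw [ZMod.natCast_zmod_val]
    rw [h1, h2, ZMod.stdAddChar_coe, ZMod.stdAddChar_coe]
    congr 1
    have hp0 : (p : ℂ) ≠ 0 := Nat.cast_ne_zero.2 hp.pos.ne'
    have hpk1 : ((p : ℂ)) ^ (k - 1) ≠ 0 := pow_ne_zero _ hp0
    have hsp : (p : ℂ) ^ k = (p : ℂ) * (p : ℂ) ^ (k - 1) := by
      rw [← pow_succ']
      congr 1
      omega
    push_cast
    rw [hsp]
    field_simp
  have hnon : ∑ y ∈ Finset.univ.filter (fun y : ZMod (p ^ k) => ¬ IsUnit y),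
      ZMod.stdAddChar (y * M)
      = ∑ t : ZMod (p ^ (k - 1)),
          ZMod.stdAddChar (t * ((M.val : ZMod (p ^ (k - 1))))) := by
    refine (Finset.sum_nbij
      (fun t : ZMod (p ^ (k - 1)) => ((p * t.val : ℕ) : ZMod (p ^ k))) ?_ ?_ ?_ ?_).symm
    · intro t _
      simp only [Finset.mem_filter, Finset.mem_univ, true_and]
      intro hu
      rw [Nat.cast_mul] at hu
      have := isUnit_of_mul_isUnit_left hu
      rw [ZMod.isUnit_prime_iff_not_dvd hp] at this
      exact this (dvd_pow_self p hk0)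
    · intro t _ s _ h
      simp only at h
      rw [ZMod.natCast_eq_natCast_iff] at h
      have h' : p * t.val ≡ p * s.val [MOD p * p ^ (k - 1)] := by
        rwa [← pow_succ', hkk]
      have := Nat.ModEq.mul_left_cancel' hp.pos.ne' h'
      have h2 := (ZMod.natCast_eq_natCast_iff _ _ _).2 this
      rwa [ZMod.natCast_zmod_val, ZMod.natCast_zmod_val] at h2
    · intro y hy
      simp only [Finset.coe_filter, Set.mem_setOf_eq, Finset.mem_univ, true_and] at hy
      have hdvd : p ∣ y.val := by
        by_contra hnd
        exact hy ((aux_isUnit_iff hp hk0 y).2 (by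
          rwa [Ne, ZMod.natCast_eq_zero_iff]))
      obtain ⟨m, hm⟩ := hdvd
      have hmlt : m < p ^ (k - 1) := by
        have hv : y.val < p ^ k := ZMod.val_lt y
        rw [hm, ← hkk, pow_succ'] at hv
        exact Nat.lt_of_mul_lt_mul_left hv
      refine ⟨(m : ZMod (p ^ (k - 1))), Finset.mem_coe.2 (Finset.mem_univ _), ?_⟩
      simp only
      rw [ZMod.val_cast_of_lt hmlt, ← hm, ZMod.natCast_zmod_val]
    · intro t _
      exact hkey t
  have h3 : ∑ t : ZMod (p ^ (k - 1)),
      ZMod.stdAddChar (t * ((M.val : ZMod (p ^ (k - 1))))) = 0 := by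
    rw [AddChar.sum_mulShift _ (ZMod.isPrimitive_stdAddChar _), if_neg hM]
    simp
  have hsplit := Finset.sum_filter_add_sum_filter_not Finset.univ
    (fun y : ZMod (p ^ k) => IsUnit y) (fun y => ZMod.stdAddChar (y * M))
  rw [htot] at hsplit
  rw [hnon, h3, add_zero] at hsplit
  rw [hunit, hsplit]


/-- Bound for the exponential sum
`∑_{h=1}^{p−1} ∑_{xz ≡ 1 + h·p^{k−1} (p^k)} ∑_{y ∈ (ℤ/p^k)^×}
  e(−y(ax + cz + b)/p^k) ≪_p p^{3k/2}` when `p ∤ b² − 4ac`. -/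
theorem stmt_15 (p : ℕ) (hp : p.Prime) (hodd : Odd p) (a b c : ℤ)
    (hD : ¬ (p : ℤ) ∣ (b ^ 2 - 4 * a * c)) :
    ∃ C : ℝ, 0 < C ∧ ∀ k : ℕ, 2 ≤ k →
      haveI : NeZero (p ^ k) := ⟨pow_ne_zero k hp.ne_zero⟩
      norm
          (∑ h ∈ Finset.Icc 1 (p - 1),
            ∑ xz ∈ Finset.univ.filter
              (fun xz : ZMod (p ^ k) × ZMod (p ^ k) =>
                xz.1 * xz.2 = 1 + (h : ZMod (p ^ k)) * (p : ZMod (p ^ k)) ^ (k - 1)),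
              ∑ y : (ZMod (p ^ k))ˣ,
                Complex.exp (2 * Real.pi * Complex.I *
                  (-((((y : ZMod (p ^ k)) *
                        ((a : ZMod (p ^ k)) * xz.1 + (c : ZMod (p ^ k)) * xz.2 +
                          (b : ZMod (p ^ k)))).val : ℝ)) / (p : ℝ) ^ k))) ≤
        C * (p : ℝ) ^ ((3 * (k : ℝ)) / 2) := by
  haveI : Fact p.Prime := ⟨hp⟩
  have hppos : (0 : ℝ) < p := by exact_mod_cast hp.pos
  refine ⟨2 * (p : ℝ) ^ 2, by positivity, ?_⟩
  intro k hk
  haveI : NeZero (p ^ k) := ⟨pow_ne_zero k hp.ne_zero⟩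
  haveI : NeZero (p ^ (k - 1)) := ⟨pow_ne_zero _ hp.ne_zero⟩
  have hk0 : k ≠ 0 := by omega
  have hk1 : k - 1 ≠ 0 := by omega
  set ψ : ZMod (p ^ k) →+* ZMod (p ^ (k - 1)) :=
    ZMod.castHom (pow_dvd_pow p (by omega : k - 1 ≤ k)) (ZMod (p ^ (k - 1))) with hψdef
  have hvalψ : ∀ x : ZMod (p ^ k), ((x.val : ZMod (p ^ (k - 1)))) = ψ x := fun x =>
    (ZMod.natCast_val x).trans (ZMod.castHom_apply x).symm
  -- rewrite the exponentials as values of the standard additive character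
  have hexp : ∀ w : ZMod (p ^ k),
      Complex.exp (2 * Real.pi * Complex.I * (-((w.val : ℝ)) / (p : ℝ) ^ k))
        = ZMod.stdAddChar (-w) := by
    intro w
    have h := ZMod.stdAddChar_coe (N := p ^ k) (-(w.val : ℤ))
    have h2 : ((-(w.val : ℤ) : ℤ) : ZMod (p ^ k)) = -w := by
      push_cast [ZMod.natCast_zmod_val]
      try rfl
    rw [h2] at h
    rw [h]
    congr 1
    push_cast
    ring
  simp only [hexp, ← mul_neg]
  -- the inner character sum; nonzero only when `ψ (a x + c z + b) = 0`
  have habs1 : ∀ w : ZMod (p ^ k), ‖ZMod.stdAddChar w‖ = 1 := by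
    intro w
    rw [ZMod.stdAddChar_apply]
    exact Circle.norm_coe _
  have hcardU : (Fintype.card (ZMod (p ^ k))ˣ : ℝ) ≤ (p : ℝ) ^ k := by
    have h1 : Fintype.card (ZMod (p ^ k))ˣ ≤ Fintype.card (ZMod (p ^ k)) :=
      Fintype.card_le_of_injective (fun u : (ZMod (p ^ k))ˣ => (u : ZMod (p ^ k)))
        (fun u v h => Units.ext h)
    rw [ZMod.card] at h1
    calc (Fintype.card (ZMod (p ^ k))ˣ : ℝ) ≤ ((p ^ k : ℕ) : ℝ) := by exact_mod_cast h1
      _ = (p : ℝ) ^ k := by push_cast; ring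
  have hbound : ∀ xz : ZMod (p ^ k) × ZMod (p ^ k),
      ‖(∑ y : (ZMod (p ^ k))ˣ,
        ZMod.stdAddChar ((y : ZMod (p ^ k)) *
          (-((a : ZMod (p ^ k)) * xz.1 + (c : ZMod (p ^ k)) * xz.2 + (b : ZMod (p ^ k))))))‖
      ≤ if ψ ((a : ZMod (p ^ k)) * xz.1 + (c : ZMod (p ^ k)) * xz.2 + (b : ZMod (p ^ k))) = 0
        then (p : ℝ) ^ k else 0 := by
    intro xz
    by_cases hcase :
        ψ ((a : ZMod (p ^ k)) * xz.1 + (c : ZMod (p ^ k)) * xz.2 + (b : ZMod (p ^ k))) = 0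
    · rw [if_pos hcase]
      calc ‖(∑ y : (ZMod (p ^ k))ˣ, ZMod.stdAddChar ((y : ZMod (p ^ k)) * _))‖
          ≤ ∑ y : (ZMod (p ^ k))ˣ, ‖(ZMod.stdAddChar ((y : ZMod (p ^ k)) * _))‖ :=
            norm_sum_le _ _
        _ = ∑ _y : (ZMod (p ^ k))ˣ, (1 : ℝ) := by simp only [habs1]
        _ = (Fintype.card (ZMod (p ^ k))ˣ : ℝ) := by simp
        _ ≤ (p : ℝ) ^ k := hcardU
    · rw [if_neg hcase]
      have hz := aux_unit_sum hp hk
        (-((a : ZMod (p ^ k)) * xz.1 + (c : ZMod (p ^ k)) * xz.2 + (b : ZMod (p ^ k))))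
        (by rw [hvalψ, map_neg]; exact neg_ne_zero.2 hcase)
      rw [hz, norm_zero]
  -- counting the pairs where the character sum survives
  set R : Finset (ZMod (p ^ (k - 1))) := Finset.univ.filter
    (fun t : ZMod (p ^ (k - 1))
      => (a : ZMod (p ^ (k - 1))) * t ^ 2 + (b : ZMod (p ^ (k - 1))) * t
        + (c : ZMod (p ^ (k - 1))) = 0) with hRdef
  have hR : R.card ≤ 2 := aux_roots hp hodd a b c hD (k - 1) hk1
  set L : Finset (ZMod (p ^ k)) := Finset.univ.filter (fun x : ZMod (p ^ k) => ψ x ∈ R)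
    with hLdef
  have hLcard : L.card ≤ p * R.card := by
    refine Finset.card_le_mul_card_image_of_maps_to
      (f := fun x => ψ x) (t := R) ?_ p ?_
    · intro x hx
      simpa [hLdef] using hx
    · intro t _
      refine le_trans (Finset.card_le_card_of_injOn (fun x => x.val / p ^ (k - 1))
        ?_ ?_ (t := Finset.range p)) (by simp)
      · intro x _
        simp only [Finset.mem_coe, Finset.mem_range]
        rw [Nat.div_lt_iff_lt_mul (pow_pos hp.pos _)]
        calc x.val < p ^ k := ZMod.val_lt x
          _ = p * p ^ (k - 1) := by rw [← pow_succ']; congr 1; omega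
      · intro x hx x' hx' hq
        simp only [Finset.coe_filter, Set.mem_setOf_eq, Finset.mem_filter] at hx hx'
        have hmx : ψ x = ψ x' := by rw [hx.2, hx'.2]
        rw [← hvalψ, ← hvalψ, ZMod.natCast_eq_natCast_iff] at hmx
        have hmod : x.val % p ^ (k - 1) = x'.val % p ^ (k - 1) := hmx
        have hq' : x.val / p ^ (k - 1) = x'.val / p ^ (k - 1) := hq
        have hval : x.val = x'.val := by
          rw [← Nat.div_add_mod x.val (p ^ (k - 1)), ← Nat.div_add_mod x'.val (p ^ (k - 1)),
            hmod, hq']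
        rw [← ZMod.natCast_zmod_val x, ← ZMod.natCast_zmod_val x', hval]
  -- units `1 + h p^{k-1}`
  have huu : ∀ h : ℕ, IsUnit (1 + (h : ZMod (p ^ k)) * (p : ZMod (p ^ k)) ^ (k - 1)) := by
    intro h
    set φk : ZMod (p ^ k) →+* ZMod p := ZMod.castHom (dvd_pow_self p hk0) (ZMod p) with hφk
    have hvalφ : ∀ x : ZMod (p ^ k), ((x.val : ZMod p)) = φk x := fun x =>
      (ZMod.natCast_val x).trans (ZMod.castHom_apply x).symm
    rw [aux_isUnit_iff hp hk0, hvalφ]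
    have : φk (1 + (h : ZMod (p ^ k)) * (p : ZMod (p ^ k)) ^ (k - 1)) = 1 := by
      rw [map_add, map_one, map_mul, map_pow, map_natCast, map_natCast, ZMod.natCast_self,
        zero_pow hk1, mul_zero, add_zero]
    rw [this]
    exact one_ne_zero
  -- counting pairs in each fiber set where the character sum survives
  have hcount : ∀ h : ℕ,
      ((Finset.univ.filter
        (fun xz : ZMod (p ^ k) × ZMod (p ^ k) =>
          xz.1 * xz.2 = 1 + (h : ZMod (p ^ k)) * (p : ZMod (p ^ k)) ^ (k - 1))).filter
        (fun xz => ψ ((a : ZMod (p ^ k)) * xz.1 + (c : ZMod (p ^ k)) * xz.2 +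
          (b : ZMod (p ^ k))) = 0)).card ≤ 2 * p := by
    intro h
    have hG : ((Finset.univ.filter
        (fun xz : ZMod (p ^ k) × ZMod (p ^ k) =>
          xz.1 * xz.2 = 1 + (h : ZMod (p ^ k)) * (p : ZMod (p ^ k)) ^ (k - 1))).filter
        (fun xz => ψ ((a : ZMod (p ^ k)) * xz.1 + (c : ZMod (p ^ k)) * xz.2 +
          (b : ZMod (p ^ k))) = 0)).card ≤ L.card := by
      refine Finset.card_le_card_of_injOn Prod.fst ?_ ?_
      · intro xz hxz
        simp only [Finset.mem_coe, Finset.mem_filter, Finset.mem_univ, true_and] at hxz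
        obtain ⟨h1, h2⟩ := hxz
        rw [Finset.mem_coe, hLdef, Finset.mem_filter]
        refine ⟨Finset.mem_univ _, ?_⟩
        rw [hRdef, Finset.mem_filter]
        refine ⟨Finset.mem_univ _, ?_⟩
        have hu1 : ψ xz.1 * ψ xz.2 = 1 := by
          rw [← map_mul, h1, map_add, map_one, map_mul, map_pow, map_natCast, map_natCast,
            ← Nat.cast_pow, ZMod.natCast_self, mul_zero, add_zero]
        have hM0 : (a : ZMod (p ^ (k - 1))) * ψ xz.1 + (c : ZMod (p ^ (k - 1))) * ψ xz.2
            + (b : ZMod (p ^ (k - 1))) = 0 := by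
          rw [map_add, map_add, map_mul, map_mul, map_intCast, map_intCast, map_intCast] at h2
          exact h2
        linear_combination (ψ xz.1) * hM0 - (c : ZMod (p ^ (k - 1))) * hu1
      · intro xz hxz xz' hxz' heq
        simp only [Finset.coe_filter, Set.mem_setOf_eq, Finset.mem_filter, Finset.mem_univ,
          true_and] at hxz hxz'
        have hx1 : IsUnit xz.1 := by
          refine isUnit_of_mul_isUnit_left (y := xz.2) ?_
          rw [hxz.1]
          exact huu h
        refine Prod.ext heq ?_
        have hmm : xz.1 * xz.2 = xz.1 * xz'.2 := by
          rw [hxz.1, heq, hxz'.1]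
        exact hx1.mul_left_cancel hmm
    calc ((Finset.univ.filter
        (fun xz : ZMod (p ^ k) × ZMod (p ^ k) =>
          xz.1 * xz.2 = 1 + (h : ZMod (p ^ k)) * (p : ZMod (p ^ k)) ^ (k - 1))).filter
        (fun xz => ψ ((a : ZMod (p ^ k)) * xz.1 + (c : ZMod (p ^ k)) * xz.2 +
          (b : ZMod (p ^ k))) = 0)).card
        ≤ L.card := hG
      _ ≤ p * R.card := hLcard
      _ ≤ p * 2 := Nat.mul_le_mul_left p hR
      _ = 2 * p := Nat.mul_comm p 2
  -- assembling the estimate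
  refine le_trans (norm_sum_le _ _) ?_
  refine le_trans (Finset.sum_le_sum (fun h _ => norm_sum_le _ _)) ?_
  refine le_trans (Finset.sum_le_sum (fun h _ => Finset.sum_le_sum
    (fun xz _ => hbound xz))) ?_
  have hh : ∀ h : ℕ,
      ∑ xz ∈ (Finset.univ.filter
        (fun xz : ZMod (p ^ k) × ZMod (p ^ k) =>
          xz.1 * xz.2 = 1 + (h : ZMod (p ^ k)) * (p : ZMod (p ^ k)) ^ (k - 1))),
        (if ψ ((a : ZMod (p ^ k)) * xz.1 + (c : ZMod (p ^ k)) * xz.2 +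
          (b : ZMod (p ^ k))) = 0 then ((p : ℝ)) ^ k else 0)
      ≤ (2 * (p : ℝ)) * (p : ℝ) ^ k := by
    intro h
    rw [← Finset.sum_filter, Finset.sum_const, nsmul_eq_mul]
    have hc := hcount h
    have hc' : (((Finset.univ.filter
        (fun xz : ZMod (p ^ k) × ZMod (p ^ k) =>
          xz.1 * xz.2 = 1 + (h : ZMod (p ^ k)) * (p : ZMod (p ^ k)) ^ (k - 1))).filter
        (fun xz => ψ ((a : ZMod (p ^ k)) * xz.1 + (c : ZMod (p ^ k)) * xz.2 +
          (b : ZMod (p ^ k))) = 0)).card : ℝ) ≤ 2 * (p : ℝ) := by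
      calc (((Finset.univ.filter
          (fun xz : ZMod (p ^ k) × ZMod (p ^ k) =>
            xz.1 * xz.2 = 1 + (h : ZMod (p ^ k)) * (p : ZMod (p ^ k)) ^ (k - 1))).filter
          (fun xz => ψ ((a : ZMod (p ^ k)) * xz.1 + (c : ZMod (p ^ k)) * xz.2 +
            (b : ZMod (p ^ k))) = 0)).card : ℝ) ≤ ((2 * p : ℕ) : ℝ) := by exact_mod_cast hc
        _ = 2 * (p : ℝ) := by push_cast; ring
    exact mul_le_mul_of_nonneg_right hc' (by positivity)
  refine le_trans (Finset.sum_le_sum (fun h _ => hh h)) ?_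
  rw [Finset.sum_const, Nat.card_Icc, nsmul_eq_mul]
  have e1 : ((p - 1 + 1 - 1 : ℕ) : ℝ) ≤ (p : ℝ) := by
    have : p - 1 + 1 - 1 ≤ p := by omega
    exact_mod_cast this
  have e2 : (p : ℝ) ^ k ≤ (p : ℝ) ^ ((3 * (k : ℝ)) / 2) := by
    rw [← Real.rpow_natCast (p : ℝ) k]
    apply Real.rpow_le_rpow_of_exponent_le (by exact_mod_cast hp.one_lt.le)
    have : (0 : ℝ) ≤ (k : ℝ) := Nat.cast_nonneg k
    linarith
  calc ((p - 1 + 1 - 1 : ℕ) : ℝ) * (2 * (p : ℝ) * (p : ℝ) ^ k)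
      ≤ (p : ℝ) * (2 * (p : ℝ) * (p : ℝ) ^ ((3 * (k : ℝ)) / 2)) := by
        apply mul_le_mul e1 ?_ (by positivity) (by positivity)
        exact mul_le_mul_of_nonneg_left e2 (by positivity)
    _ = 2 * (p : ℝ) ^ 2 * (p : ℝ) ^ ((3 * (k : ℝ)) / 2) := by ring
end
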